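/- arXiv:2108.00059 — 8 statements merged into one kernel-verified Lean document; each statement's English description precedes it below -/
import Mathlib

section
/- If G is a 2-connected K_{2,3}-minor-free graph that contains K_4 as a minor, then G is isomorphic to K_4. -/
open SimpleGraph

variable {α β : Type*}

/-- A model of `H` in `G`: a family of pairwise disjoint nonempty vertex subsets of `G`,
each inducing a connected subgraph, such that for every edge `h h'` of `H` there is an
edge of `G` between `V h` and `V h'`. -/
def IsMinorModel (G : SimpleGraph α) (H : SimpleGraph β) (V : β → Set α) : Prop :=
  (∀ h, (V h).Nonempty) ∧
  (Pairwise fun h h' => Disjoint (V h) (V h')) ∧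
  (∀ h, (G.induce (V h)).Connected) ∧
  ∀ h h', H.Adj h h' → ∃ x ∈ V h, ∃ y ∈ V h', G.Adj x y

/-- `H` is a minor of `G`. -/
def HasMinor (G : SimpleGraph α) (H : SimpleGraph β) : Prop :=
  ∃ V : β → Set α, IsMinorModel G H V

/-- `G` is `H`-minimal: `H` is a minor of `G`, but for every vertex `x` of `G`,
`H` is not a minor of `G − x`. -/
def MinorMinimal (G : SimpleGraph α) (H : SimpleGraph β) : Prop :=
  HasMinor G H ∧ ∀ x : α, ¬ HasMinor (G.induce {y | y ≠ x}) H

/-- A graph is 2-connected if it has at least 3 vertices, is connected, and stays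
connected after deleting any single vertex. -/
def TwoConnected [Fintype α] (G : SimpleGraph α) : Prop :=
  3 ≤ Fintype.card α ∧ G.Connected ∧ ∀ v : α, (G.induce {w | w ≠ v}).Connected

/-- `G` is a cycle: connected and 2-regular. -/
def IsCycleGraph (G : SimpleGraph α) : Prop :=
  G.Connected ∧ ∀ v : α, (G.neighborSet v).ncard = 2

section Helpers
variable {G : SimpleGraph α}


lemma induce_adj_of {S : Set α} {a b : α} (ha : a ∈ S) (hb : b ∈ S) (h : G.Adj a b) :
    (G.induce S).Adj ⟨a, ha⟩ ⟨b, hb⟩ := by simpa using h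

lemma adj_of_induce_adj {S : Set α} {a b : ↥S} (h : (G.induce S).Adj a b) : G.Adj a b := by
  simpa using h

lemma reachable_induce_of_walk {S T : Set α} {u v : ↥S} (p : (G.induce S).Walk u v)
    (hT : ∀ w ∈ p.support, (w : α) ∈ T) :
    (G.induce T).Reachable ⟨u, hT u p.start_mem_support⟩ ⟨v, hT v p.end_mem_support⟩ := by
  induction p with
  | nil => rfl
  | @cons a b c h p ih =>
      have hb : (b : α) ∈ T := hT b (by simp)
      have h1 : (G.induce T).Adj ⟨a, hT a (by simp)⟩ ⟨b, hb⟩ :=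
        induce_adj_of _ _ (adj_of_induce_adj h)
      exact (h1.reachable).trans (ih fun w hw => hT w (by simp [hw]))

lemma induce_singleton_connected (G : SimpleGraph α) (a : α) :
    (G.induce {a}).Connected := by
  rw [connected_iff]
  refine ⟨fun u v => ?_, ⟨⟨a, rfl⟩⟩⟩
  have : u = v := Subtype.ext (u.2.trans v.2.symm)
  exact this ▸ Reachable.refl u

lemma exists_noncut [Finite α] {S : Set α} (hconn : (G.induce S).Connected)
    (h2 : 2 ≤ S.ncard) :
    ∃ a ∈ S, (S \ {a}).Nonempty ∧ (G.induce (S \ {a})).Connected := by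
  classical
  have : Fintype ↥S := Fintype.ofFinite _
  haveI : Nonempty ↥S := hconn.nonempty
  set H := G.induce S with hH
  obtain ⟨r⟩ := (inferInstance : Nonempty ↥S)
  obtain ⟨a, -, hmax⟩ := Finset.exists_max_image Finset.univ (fun x => H.dist r x)
    ⟨r, Finset.mem_univ r⟩
  have hmax : ∀ x : ↥S, H.dist r x ≤ H.dist r a := fun x => hmax x (Finset.mem_univ x)
  -- a ≠ r
  obtain ⟨b, hbS, hbr⟩ := Set.exists_ne_of_one_lt_ncard (s := S) (by omega) (r : α)
  have hbne : (⟨b, hbS⟩ : ↥S) ≠ r := fun h => hbr (congrArg Subtype.val h)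
  have hpos : 0 < H.dist r a :=
    lt_of_lt_of_le (hconn.pos_dist_of_ne (Ne.symm hbne)) (hmax _)
  have har : a ≠ r := by
    intro h; rw [h, SimpleGraph.dist_self] at hpos; exact lt_irrefl _ hpos
  -- every x ≠ a has a shortest walk from r avoiding a
  have key : ∀ x : ↥S, x ≠ a → ∃ p : H.Walk r x, a ∉ p.support := by
    intro x hxa
    obtain ⟨p, hp⟩ := (hconn r x).exists_walk_length_eq_dist
    refine ⟨p, fun hmem => ?_⟩
    have hsplit := p.take_spec hmem
    have hlen : (p.takeUntil a hmem).length + (p.dropUntil a hmem).length = p.length := by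
      have := congrArg Walk.length hsplit
      rwa [Walk.length_append] at this
    have h1 : H.dist r a ≤ (p.takeUntil a hmem).length := dist_le _
    have h2 : H.dist a x ≤ (p.dropUntil a hmem).length := dist_le _
    have h3 : 0 < H.dist a x := hconn.pos_dist_of_ne (fun h => hxa h.symm)
    have h4 : H.dist r x ≤ H.dist r a := hmax x
    omega
  refine ⟨a, a.2, ⟨r, r.2, fun h => har (Subtype.ext (Set.mem_singleton_iff.mp h)).symm⟩, ?_⟩
  have hrT : (r : α) ∈ S \ {(a : α)} :=
    ⟨r.2, fun h => har (Subtype.ext (Set.mem_singleton_iff.mp h)).symm⟩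
  have reach : ∀ x : ↥(S \ {(a : α)}), (G.induce (S \ {(a : α)})).Reachable ⟨r, hrT⟩ x := by
    intro x
    have hxS : (x : α) ∈ S := x.2.1
    have hxa : (⟨(x : α), hxS⟩ : ↥S) ≠ a := fun h => x.2.2 (by
      simpa using congrArg Subtype.val h)
    obtain ⟨p, hp⟩ := key ⟨(x : α), hxS⟩ hxa
    have hT : ∀ w ∈ p.support, (w : α) ∈ S \ {(a : α)} := by
      intro w hw
      refine ⟨w.2, fun hww => ?_⟩
      have : w = a := Subtype.ext (Set.mem_singleton_iff.mp hww)
      exact hp (this ▸ hw)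
    have := reachable_induce_of_walk p hT
    convert this using 2 <;> simp
  rw [connected_iff]
  exact ⟨fun x y => (reach x).symm.trans (reach y), ⟨⟨r, hrT⟩⟩⟩
lemma exists_adj_boundary {T A : Set α} (hconn : (G.induce T).Connected) (hA : A ⊆ T)
    {x y : α} (hx : x ∈ A) (hyT : y ∈ T) (hyA : y ∉ A) :
    ∃ a ∈ A, ∃ b ∈ T \ A, G.Adj a b := by
  obtain ⟨p⟩ := hconn ⟨x, hA hx⟩ ⟨y, hyT⟩
  obtain ⟨d, _, hfst, hsnd⟩ := p.exists_boundary_dart {w : ↥T | (w : α) ∈ A} hx hyA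
  exact ⟨d.fst, hfst, d.snd, ⟨d.snd.2, hsnd⟩, adj_of_induce_adj d.adj⟩

lemma exsymm {A B : Set α} (h : ∃ x ∈ A, ∃ y ∈ B, G.Adj x y) :
    ∃ x ∈ B, ∃ y ∈ A, G.Adj x y := by
  obtain ⟨x, hx, y, hy, h⟩ := h
  exact ⟨y, hy, x, hx, h.symm⟩

/-- builder -/
lemma k23_of_sets (A B C D E : Set α)
    (hAn : A.Nonempty) (hBn : B.Nonempty) (hCn : C.Nonempty) (hDn : D.Nonempty) (hEn : E.Nonempty)
    (hAc : (G.induce A).Connected) (hBc : (G.induce B).Connected) (hCc : (G.induce C).Connected)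
    (hDc : (G.induce D).Connected) (hEc : (G.induce E).Connected)
    (dAB : Disjoint A B) (dAC : Disjoint A C) (dAD : Disjoint A D) (dAE : Disjoint A E)
    (dBC : Disjoint B C) (dBD : Disjoint B D) (dBE : Disjoint B E)
    (dCD : Disjoint C D) (dCE : Disjoint C E) (dDE : Disjoint D E)
    (eAC : ∃ x ∈ A, ∃ y ∈ C, G.Adj x y) (eAD : ∃ x ∈ A, ∃ y ∈ D, G.Adj x y)
    (eAE : ∃ x ∈ A, ∃ y ∈ E, G.Adj x y) (eBC : ∃ x ∈ B, ∃ y ∈ C, G.Adj x y)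
    (eBD : ∃ x ∈ B, ∃ y ∈ D, G.Adj x y) (eBE : ∃ x ∈ B, ∃ y ∈ E, G.Adj x y) :
    HasMinor G (completeBipartiteGraph (Fin 2) (Fin 3)) := by
  classical
  refine ⟨Sum.elim ![A, B] ![C, D, E], ?_, ?_, ?_, ?_⟩
  · rintro (i | j)
    · fin_cases i
      · simpa using hAn
      · simpa using hBn
    · fin_cases j
      · simpa using hCn
      · simpa using hDn
      · simpa using hEn
  · rintro (i | j) (i' | j') hne <;> simp only [Sum.elim_inl, Sum.elim_inr]
    · have : i ≠ i' := fun h => hne (by rw [h])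
      fin_cases i <;> fin_cases i' <;> simp_all [dAB, dAB.symm]
    · fin_cases i <;> fin_cases j' <;>
        simp [dAC, dAD, dAE, dBC, dBD, dBE]
    · fin_cases j <;> fin_cases i' <;>
        simp [dAC.symm, dAD.symm, dAE.symm, dBC.symm, dBD.symm, dBE.symm]
    · have : j ≠ j' := fun h => hne (by rw [h])
      fin_cases j <;> fin_cases j' <;>
        simp_all [dCD, dCE, dDE, dCD.symm, dCE.symm, dDE.symm]
  · rintro (i | j)
    · fin_cases i
      · simpa using hAc
      · simpa using hBc
    · fin_cases j
      · simpa using hCc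
      · simpa using hDc
      · simpa using hEc
  · rintro (i | j) (i' | j') hadj
    · simp [completeBipartiteGraph] at hadj
    · simp only [Sum.elim_inl, Sum.elim_inr]
      fin_cases i <;> fin_cases j'
      · simpa using eAC
      · simpa using eAD
      · simpa using eAE
      · simpa using eBC
      · simpa using eBD
      · simpa using eBE
    · simp only [Sum.elim_inl, Sum.elim_inr]
      fin_cases j <;> fin_cases i'
      · simpa using exsymm eAC
      · simpa using exsymm eBC
      · simpa using exsymm eAD
      · simpa using exsymm eBD
      · simpa using exsymm eAE
      · simpa using exsymm eBE
    · simp [completeBipartiteGraph] at hadj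

lemma isMinorModel_top_comp {n : ℕ} (V : Fin n → Set α) (e : Fin n ≃ Fin n)
    (h : IsMinorModel G (⊤ : SimpleGraph (Fin n)) V) :
    IsMinorModel G (⊤ : SimpleGraph (Fin n)) (V ∘ e) := by
  obtain ⟨h1, h2, h3, h4⟩ := h
  refine ⟨fun i => h1 _, fun i j hij => h2 (fun hh => hij (e.injective hh)), fun i => h3 _,
    fun i j hij => h4 _ _ ?_⟩
  simp only [top_adj] at hij ⊢
  exact fun hh => hij (e.injective hh)

lemma k23_of_k4_subgraph [Fintype α] (h2c : G.Connected)
    (h2d : ∀ v : α, (G.induce {w | w ≠ v}).Connected)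
    (u : Fin 4 → α) (hinj : Function.Injective u)
    (hadj : ∀ i j, i ≠ j → G.Adj (u i) (u j)) (hcard : 5 ≤ Fintype.card α) :
    HasMinor G (completeBipartiteGraph (Fin 2) (Fin 3)) := by
  classical
  have hnsurj : ¬ Function.Surjective u := by
    intro hs
    have := Fintype.card_le_of_surjective u hs
    simp only [Fintype.card_fin] at this
    omega
  obtain ⟨w, hw⟩ : ∃ w : α, ∀ i, u i ≠ w := by
    by_contra h
    push_neg at h
    exact hnsurj fun w => h w
  set T : Set α := {v | ∀ i, v ≠ u i} with hT
  have hwT : w ∈ T := fun i h => hw i h.symm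
  set A : Set α := {b | ∃ hb : b ∈ T, (G.induce T).Reachable ⟨w, hwT⟩ ⟨b, hb⟩} with hA
  have hwA : w ∈ A := ⟨hwT, Reachable.refl _⟩
  have hAT : A ⊆ T := fun b hb => hb.1
  have hclosed : ∀ x ∈ A, ∀ b ∈ T, G.Adj x b → b ∈ A := by
    intro x hx b hb hadj'
    exact ⟨hb, hx.2.trans (induce_adj_of hx.1 hb hadj').reachable⟩
  have hAconn : (G.induce A).Connected := by
    rw [connected_iff]
    refine ⟨?_, ⟨⟨w, hwA⟩⟩⟩
    have reach : ∀ x : ↥A, (G.induce A).Reachable ⟨w, hwA⟩ x := by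
      intro x
      obtain ⟨hxT, ⟨p⟩⟩ := x.2
      have hsup : ∀ v ∈ p.support, (v : α) ∈ A := by
        intro v hv
        exact ⟨v.2, ⟨p.takeUntil v hv⟩⟩
      have := reachable_induce_of_walk p hsup
      convert this using 2 <;> simp
    exact fun x y => (reach x).symm.trans (reach y)
  have huA : ∀ i, u i ∉ A := fun i hi => (hAT hi) i rfl
  have hunivconn : (G.induce (Set.univ : Set α)).Connected :=
    (induceUnivIso G).connected_iff.mpr h2c
  obtain ⟨a, haA, b, hb, hab⟩ := exists_adj_boundary hunivconn (Set.subset_univ A)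
    hwA (Set.mem_univ (u 0)) (huA 0)
  have hbT : b ∉ T := fun hbT => hb.2 (hclosed a haA b hbT hab)
  obtain ⟨i, hbi⟩ : ∃ i, b = u i := by
    by_contra h
    push_neg at h
    exact hbT fun m => h m
  set T2 : Set α := {y | y ≠ u i} with hT2
  have hAT2 : A ⊆ T2 := fun x hx => (hAT hx) i
  obtain ⟨i', hii'⟩ := exists_ne i
  have hui'T2 : u i' ∈ T2 := fun h => hii' (hinj h)
  obtain ⟨a', ha'A, b', hb', hab'⟩ := exists_adj_boundary (h2d (u i)) hAT2 hwA hui'T2 (huA i')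
  have hb'T : b' ∉ T := fun hbT => hb'.2 (hclosed a' ha'A b' hbT hab')
  obtain ⟨j, hbj⟩ : ∃ j, b' = u j := by
    by_contra h
    push_neg at h
    exact hb'T fun m => h m
  have hji : j ≠ i := by
    rintro rfl
    exact hb'.1 hbj
  obtain ⟨k, l, hkl, hki, hkj, hli, hlj⟩ :=
    (by decide : ∀ i j : Fin 4, i ≠ j → ∃ k l : Fin 4, k ≠ l ∧ k ≠ i ∧ k ≠ j ∧ l ≠ i ∧ l ≠ j)
      i j (Ne.symm hji)
  refine k23_of_sets {u i} {u j} {u k} {u l} A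
    (Set.singleton_nonempty _) (Set.singleton_nonempty _) (Set.singleton_nonempty _)
    (Set.singleton_nonempty _) ⟨w, hwA⟩
    (induce_singleton_connected G _) (induce_singleton_connected G _)
    (induce_singleton_connected G _) (induce_singleton_connected G _) hAconn
    (Set.disjoint_singleton.mpr (hinj.ne hji.symm))
    (Set.disjoint_singleton.mpr (hinj.ne (Ne.symm hki)))
    (Set.disjoint_singleton.mpr (hinj.ne (Ne.symm hli)))
    (Set.disjoint_singleton_left.mpr (huA i))
    (Set.disjoint_singleton.mpr (hinj.ne (Ne.symm hkj)))
    (Set.disjoint_singleton.mpr (hinj.ne (Ne.symm hlj)))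
    (Set.disjoint_singleton_left.mpr (huA j))
    (Set.disjoint_singleton.mpr (hinj.ne hkl))
    (Set.disjoint_singleton_left.mpr (huA k))
    (Set.disjoint_singleton_left.mpr (huA l))
    ⟨u i, rfl, u k, rfl, hadj i k (Ne.symm hki)⟩
    ⟨u i, rfl, u l, rfl, hadj i l (Ne.symm hli)⟩
    ⟨u i, rfl, a, haA, (hbi ▸ hab).symm⟩
    ⟨u j, rfl, u k, rfl, hadj j k (Ne.symm hkj)⟩
    ⟨u j, rfl, u l, rfl, hadj j l (Ne.symm hlj)⟩
    ⟨u j, rfl, a', ha'A, (hbj ▸ hab').symm⟩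

lemma k23_of_min_model [Fintype α] (V : Fin 4 → Set α)
    (hV : IsMinorModel G (⊤ : SimpleGraph (Fin 4)) V)
    (hmin : ∀ W : Fin 4 → Set α, IsMinorModel G (⊤ : SimpleGraph (Fin 4)) W →
      (⋃ i, V i).ncard ≤ (⋃ i, W i).ncard)
    (hbig : 2 ≤ (V 0).ncard) :
    HasMinor G (completeBipartiteGraph (Fin 2) (Fin 3)) := by
  classical
  obtain ⟨hne, hdisj, hconn, hedge⟩ := hV
  set S : Set α := V 0 with hS
  obtain ⟨a, haS, hS'ne, hS'conn⟩ := exists_noncut (hconn 0) hbig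
  set S' : Set α := S \ {a} with hS'def
  have hS'S : S' ⊆ S := Set.diff_subset
  have haS' : a ∉ S' := fun h => h.2 rfl
  -- edge from S' to a
  have eS'a : ∃ x ∈ S', G.Adj x a := by
    obtain ⟨x, hx, b, hbmem, hxb⟩ := exists_adj_boundary (hconn 0) hS'S hS'ne.some_mem haS haS'
    have : b = a := by
      by_contra h
      exact hbmem.2 ⟨hbmem.1, h⟩
    exact ⟨x, hx, this ▸ hxb⟩
  -- a is not in other branch sets
  have haV : ∀ m : Fin 4, m ≠ 0 → a ∉ V m := fun m hm h =>
    Set.disjoint_left.mp (hdisj hm) h haS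
  -- the smaller family
  have hssub : ∀ {X : Set α}, X ⊆ S → X ≠ S →
      (⋃ i, (Function.update V 0 X) i) ⊂ ⋃ i, V i := by
    intro X hXS hXne
    constructor
    · refine Set.iUnion_subset fun i => ?_
      by_cases h : i = 0
      · subst h
        rw [Function.update_self]
        exact hXS.trans (Set.subset_iUnion V 0)
      · rw [Function.update_of_ne h]
        exact Set.subset_iUnion V i
    · intro hsup
      obtain ⟨y, hyS, hyX⟩ : ∃ y ∈ S, y ∉ X := by
        by_contra h
        push_neg at h
        exact hXne (le_antisymm hXS h)
      have : y ∈ ⋃ i, (Function.update V 0 X) i := hsup (Set.mem_iUnion.mpr ⟨0, hyS⟩)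
      obtain ⟨m, hm⟩ := Set.mem_iUnion.mp this
      by_cases h : m = 0
      · subst h
        rw [Function.update_self] at hm
        exact hyX hm
      · rw [Function.update_of_ne h] at hm
        exact Set.disjoint_left.mp (hdisj h) hm hyS
  have hsmaller : ∀ {X : Set α}, X ⊆ S → X ≠ S →
      ¬ IsMinorModel G (⊤ : SimpleGraph (Fin 4)) (Function.update V 0 X) := by
    intro X hXS hXne hmodel
    have h1 := hmin _ hmodel
    have h2 := Set.ncard_lt_ncard (hssub hXS hXne) (Set.toFinite _)
    omega
  have hS'neS : S' ≠ S := fun h => haS' (h ▸ haS)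
  -- the update with S' fails only in the edge condition
  have hfail : ¬ ∀ p q : Fin 4, (⊤ : SimpleGraph (Fin 4)).Adj p q →
      ∃ x ∈ (Function.update V 0 S') p, ∃ y ∈ (Function.update V 0 S') q, G.Adj x y := by
    intro he
    refine hsmaller hS'S hS'neS ⟨?_, ?_, ?_, he⟩
    · intro i
      by_cases h : i = 0
      · subst h; rw [Function.update_self]; exact hS'ne
      · rw [Function.update_of_ne h]; exact hne i
    · intro i j hij
      have hsub : ∀ m, (Function.update V 0 S') m ⊆ V m := by
        intro m
        by_cases h : m = 0
        · subst h; rw [Function.update_self]; exact hS'S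
        · rw [Function.update_of_ne h]
      exact ((hdisj hij).mono (hsub i) (hsub j))
    · intro i
      by_cases h : i = 0
      · subst h; rw [Function.update_self]; exact hS'conn
      · rw [Function.update_of_ne h]; exact hconn i
  push_neg at hfail
  obtain ⟨p, q, hpq, hno⟩ := hfail
  rw [top_adj _ _] at hpq
  -- extract the bad index j ≠ 0 with no S'–V j edges
  obtain ⟨j, hj0, hnoj⟩ : ∃ j : Fin 4, j ≠ 0 ∧ ∀ x ∈ S', ∀ y ∈ V j, ¬ G.Adj x y := by
    by_cases hp : p = 0
    · subst hp
      refine ⟨q, Ne.symm hpq, ?_⟩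
      rw [Function.update_self] at hno
      intro x hx y hy
      exact hno x hx y (by rw [Function.update_of_ne (Ne.symm hpq)]; exact hy)
    · by_cases hq : q = 0
      · subst hq
        refine ⟨p, hp, ?_⟩
        intro x hx y hy
        have := hno y (by rw [Function.update_of_ne hp]; exact hy) x
          (by rw [Function.update_self]; exact hx)
        exact fun hadj => this hadj.symm
      · exfalso
        obtain ⟨x, hx, y, hy, hxy⟩ := hedge p q ((top_adj _ _).mpr hpq)
        exact hno x (by rw [Function.update_of_ne hp]; exact hx) y
          (by rw [Function.update_of_ne hq]; exact hy) hxy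
  -- a has an edge to V j
  have eaj : ∃ y ∈ V j, G.Adj a y := by
    obtain ⟨x, hx, y, hy, hxy⟩ := hedge 0 j ((top_adj _ _).mpr (Ne.symm hj0))
    have : x = a := by
      by_contra h
      exact hnoj x ⟨hx, h⟩ y hy hxy
    exact ⟨y, hy, this ▸ hxy⟩
  obtain ⟨k, l, hk0, hl0, hjk, hjl, hkl, hcover⟩ :=
    (by decide : ∀ j : Fin 4, j ≠ 0 → ∃ k l : Fin 4, k ≠ 0 ∧ l ≠ 0 ∧ j ≠ k ∧ j ≠ l ∧ k ≠ l ∧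
      ∀ m : Fin 4, m ≠ 0 → m = j ∨ m = k ∨ m = l) j hj0
  -- disjointness helpers
  have dS'V : ∀ m : Fin 4, m ≠ 0 → Disjoint S' (V m) :=
    fun m hm => (hdisj (Ne.symm hm)).mono_left hS'S
  have daV : ∀ m : Fin 4, m ≠ 0 → Disjoint {a} (V m) :=
    fun m hm => Set.disjoint_singleton_left.mpr (haV m hm)
  have daS' : Disjoint {a} S' := Set.disjoint_singleton_left.mpr haS'
  by_cases hk : ∃ x ∈ S', ∃ y ∈ V k, G.Adj x y
  · by_cases hl : ∃ x ∈ S', ∃ y ∈ V l, G.Adj x y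
    · -- hubs V j, S'; middles {a}, V k, V l
      refine k23_of_sets (V j) S' {a} (V k) (V l)
        (hne j) hS'ne (Set.singleton_nonempty a) (hne k) (hne l)
        (hconn j) hS'conn (induce_singleton_connected G a) (hconn k) (hconn l)
        ((dS'V j hj0).symm) ((daV j hj0).symm) (hdisj hjk) (hdisj hjl)
        (daS'.symm) (dS'V k hk0) (dS'V l hl0)
        (daV k hk0) (daV l hl0) (hdisj hkl)
        ?_ (hedge j k ((top_adj _ _).mpr hjk)) (hedge j l ((top_adj _ _).mpr hjl))
        ?_ hk hl
      · obtain ⟨y, hy, hay⟩ := eaj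
        exact ⟨y, hy, a, rfl, hay.symm⟩
      · obtain ⟨x, hx, hxa⟩ := eS'a
        exact ⟨x, hx, a, rfl, hxa⟩
    · -- V l touches S only at a
      have eal : ∃ y ∈ V l, G.Adj a y := by
        obtain ⟨x, hx, y, hy, hxy⟩ := hedge 0 l ((top_adj _ _).mpr (Ne.symm hl0))
        have : x = a := by
          by_contra h
          exact hl ⟨x, ⟨hx, h⟩, y, hy, hxy⟩
        exact ⟨y, hy, this ▸ hxy⟩
      -- hubs {a}, V k; middles V j, V l, S'
      refine k23_of_sets {a} (V k) (V j) (V l) S'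
        (Set.singleton_nonempty a) (hne k) (hne j) (hne l) hS'ne
        (induce_singleton_connected G a) (hconn k) (hconn j) (hconn l) hS'conn
        (daV k hk0) (daV j hj0) (daV l hl0) daS'
        (hdisj (Ne.symm hjk)) (hdisj (fun h => hkl h)) ((dS'V k hk0).symm)
        (hdisj hjl) ((dS'V j hj0).symm) ((dS'V l hl0).symm)
        ?_ ?_ ?_
        (hedge k j ((top_adj _ _).mpr (Ne.symm hjk))) (hedge k l ((top_adj _ _).mpr hkl))
        (exsymm hk)
      · obtain ⟨y, hy, hay⟩ := eaj
        exact ⟨a, rfl, y, hy, hay⟩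
      · obtain ⟨y, hy, hay⟩ := eal
        exact ⟨a, rfl, y, hy, hay⟩
      · obtain ⟨x, hx, hxa⟩ := eS'a
        exact ⟨a, rfl, x, hx, hxa.symm⟩
  · -- V k touches S only at a
    have eak : ∃ y ∈ V k, G.Adj a y := by
      obtain ⟨x, hx, y, hy, hxy⟩ := hedge 0 k ((top_adj _ _).mpr (Ne.symm hk0))
      have : x = a := by
        by_contra h
        exact hk ⟨x, ⟨hx, h⟩, y, hy, hxy⟩
      exact ⟨y, hy, this ▸ hxy⟩
    by_cases hl : ∃ x ∈ S', ∃ y ∈ V l, G.Adj x y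
    · -- hubs {a}, V l; middles V j, V k, S'
      refine k23_of_sets {a} (V l) (V j) (V k) S'
        (Set.singleton_nonempty a) (hne l) (hne j) (hne k) hS'ne
        (induce_singleton_connected G a) (hconn l) (hconn j) (hconn k) hS'conn
        (daV l hl0) (daV j hj0) (daV k hk0) daS'
        (hdisj (Ne.symm hjl)) (hdisj (Ne.symm hkl)) ((dS'V l hl0).symm)
        (hdisj hjk) ((dS'V j hj0).symm) ((dS'V k hk0).symm)
        ?_ ?_ ?_
        (hedge l j ((top_adj _ _).mpr (Ne.symm hjl))) (hedge l k ((top_adj _ _).mpr (Ne.symm hkl)))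
        (exsymm hl)
      · obtain ⟨y, hy, hay⟩ := eaj
        exact ⟨a, rfl, y, hy, hay⟩
      · obtain ⟨y, hy, hay⟩ := eak
        exact ⟨a, rfl, y, hy, hay⟩
      · obtain ⟨x, hx, hxa⟩ := eS'a
        exact ⟨a, rfl, x, hx, hxa.symm⟩
    · -- both k and l touch S only at a; also j: shrink S to {a}: contradiction
      exfalso
      have eal : ∃ y ∈ V l, G.Adj a y := by
        obtain ⟨x, hx, y, hy, hxy⟩ := hedge 0 l ((top_adj _ _).mpr (Ne.symm hl0))
        have : x = a := by
          by_contra h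
          exact hl ⟨x, ⟨hx, h⟩, y, hy, hxy⟩
        exact ⟨y, hy, this ▸ hxy⟩
      have haSne : ({a} : Set α) ≠ S := by
        intro h
        obtain ⟨x, hx⟩ := hS'ne
        exact hx.2 (by have := h ▸ hx.1; exact this)
      have hea : ∀ m : Fin 4, m ≠ 0 → ∃ y ∈ V m, G.Adj a y := by
        intro m hm
        rcases hcover m hm with rfl | rfl | rfl
        · exact eaj
        · exact eak
        · exact eal
      refine hsmaller (Set.singleton_subset_iff.mpr haS) haSne ⟨?_, ?_, ?_, ?_⟩
      · intro i
        by_cases h : i = 0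
        · subst h; rw [Function.update_self]; exact Set.singleton_nonempty a
        · rw [Function.update_of_ne h]; exact hne i
      · intro i j' hij
        have hsub : ∀ m, (Function.update V 0 ({a} : Set α)) m ⊆ V m := by
          intro m
          by_cases h : m = 0
          · subst h; rw [Function.update_self]; exact Set.singleton_subset_iff.mpr haS
          · rw [Function.update_of_ne h]
        exact (hdisj hij).mono (hsub i) (hsub j')
      · intro i
        by_cases h : i = 0
        · subst h; rw [Function.update_self]; exact induce_singleton_connected G a
        · rw [Function.update_of_ne h]; exact hconn i
      · intro p' q' hpq'
        rw [top_adj _ _] at hpq'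
        by_cases hp' : p' = 0
        · subst hp'
          have hq' : q' ≠ 0 := Ne.symm hpq'
          rw [Function.update_self, Function.update_of_ne hq']
          obtain ⟨y, hy, hay⟩ := hea q' hq'
          exact ⟨a, rfl, y, hy, hay⟩
        · by_cases hq' : q' = 0
          · subst hq'
            rw [Function.update_self, Function.update_of_ne hp']
            obtain ⟨y, hy, hay⟩ := hea p' hp'
            exact ⟨y, hy, a, rfl, hay.symm⟩
          · rw [Function.update_of_ne hp', Function.update_of_ne hq']
            exact hedge p' q' ((top_adj _ _).mpr hpq')

lemma k23_of_card_ge_five [Fintype α] (h2 : TwoConnected G)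
    (hK4 : HasMinor G (⊤ : SimpleGraph (Fin 4))) (hcard : 5 ≤ Fintype.card α) :
    HasMinor G (completeBipartiteGraph (Fin 2) (Fin 3)) := by
  classical
  have hP : ∃ n : ℕ, ∃ V : Fin 4 → Set α,
      IsMinorModel G (⊤ : SimpleGraph (Fin 4)) V ∧ (⋃ i, V i).ncard = n := by
    obtain ⟨V, hV⟩ := hK4
    exact ⟨_, V, hV, rfl⟩
  obtain ⟨V, hV, hn⟩ := Nat.find_spec hP
  have hmin : ∀ W : Fin 4 → Set α, IsMinorModel G (⊤ : SimpleGraph (Fin 4)) W →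
      (⋃ i, V i).ncard ≤ (⋃ i, W i).ncard := by
    intro W hW
    rw [hn]
    exact Nat.find_min' hP ⟨W, hW, rfl⟩
  by_cases hsing : ∀ i, ∃ x, V i = {x}
  · choose u hu using hsing
    have hinj : Function.Injective u := by
      intro i j hij
      by_contra hne
      have hd : Disjoint (V i) (V j) := hV.2.1 hne
      rw [hu i, hu j, hij] at hd
      simp at hd
    have hadj : ∀ i j, i ≠ j → G.Adj (u i) (u j) := by
      intro i j hij
      obtain ⟨x, hx, y, hy, hxy⟩ := hV.2.2.2 i j ((top_adj _ _).mpr hij)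
      rw [hu i] at hx
      rw [hu j] at hy
      rwa [Set.mem_singleton_iff.mp hx, Set.mem_singleton_iff.mp hy] at hxy
    exact k23_of_k4_subgraph h2.2.1 h2.2.2 u hinj hadj hcard
  · push_neg at hsing
    obtain ⟨i, hi⟩ := hsing
    have hbig : 2 ≤ (V i).ncard := by
      have h1 : (V i).ncard ≠ 1 := by
        intro h
        obtain ⟨a, ha⟩ := Set.ncard_eq_one.mp h
        exact hi a ha
      have h0 : 0 < (V i).ncard := (Set.ncard_pos (Set.toFinite _)).mpr (hV.1 i)
      omega
    set e : Fin 4 ≃ Fin 4 := Equiv.swap 0 i with he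
    have hVe : IsMinorModel G (⊤ : SimpleGraph (Fin 4)) (V ∘ e) :=
      isMinorModel_top_comp V e hV
    have hunion : ⋃ m, (V ∘ e) m = ⋃ m, V m := e.surjective.iUnion_comp V
    have hmine : ∀ W : Fin 4 → Set α, IsMinorModel G (⊤ : SimpleGraph (Fin 4)) W →
        (⋃ m, (V ∘ e) m).ncard ≤ (⋃ m, W m).ncard := by
      intro W hW
      rw [hunion]
      exact hmin W hW
    have h0 : (V ∘ e) 0 = V i := by
      simp [he, Equiv.swap_apply_left]
    exact k23_of_min_model (V ∘ e) hVe hmine (h0 ▸ hbig)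

end Helpers

/-- If `G` is a 2-connected `K_{2,3}`-minor-free graph containing `K₄` as a minor,
then `G` is isomorphic to `K₄`. -/
theorem twoConnected_k23_minor_free_with_k4 (G : SimpleGraph α) [Fintype α]
    (h2 : TwoConnected G)
    (hfree : ¬ HasMinor G (completeBipartiteGraph (Fin 2) (Fin 3)))
    (hK4 : HasMinor G (⊤ : SimpleGraph (Fin 4))) :
    Nonempty (G ≃g (⊤ : SimpleGraph (Fin 4))) := by
  classical
  obtain ⟨V, hV⟩ := hK4
  choose x hx using hV.1
  have xinj : Function.Injective x := by
    intro i j hij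
    by_contra hne
    exact Set.disjoint_left.mp (hV.2.1 hne) (hx i) (hij ▸ hx j)
  have hge : 4 ≤ Fintype.card α := by
    have := Fintype.card_le_of_injective x xinj
    simpa using this
  have hlt : Fintype.card α < 5 := by
    by_contra h
    push_neg at h
    exact hfree (k23_of_card_ge_five h2 ⟨V, hV⟩ h)
  have hcard : Fintype.card α = 4 := by omega
  have xbij : Function.Bijective x := by
    rw [Fintype.bijective_iff_injective_and_card]
    exact ⟨xinj, by simp [hcard]⟩
  have hsingle : ∀ i, V i = {x i} := by
    intro i
    ext y
    constructor
    · intro hy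
      obtain ⟨j, rfl⟩ := xbij.2 y
      by_contra hne
      have hji : j ≠ i := by
        rintro rfl
        exact hne rfl
      exact Set.disjoint_left.mp (hV.2.1 hji) (hx j) hy
    · rintro rfl
      exact hx i
  have hadj : ∀ i j, i ≠ j → G.Adj (x i) (x j) := by
    intro i j hij
    obtain ⟨u, hu, v, hv, huv⟩ := hV.2.2.2 i j ((top_adj _ _).mpr hij)
    rw [hsingle i] at hu
    rw [hsingle j] at hv
    rwa [Set.mem_singleton_iff.mp hu, Set.mem_singleton_iff.mp hv] at huv
  set e : Fin 4 ≃ α := Equiv.ofBijective x xbij with he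
  refine ⟨⟨e.symm, ?_⟩⟩
  intro u v
  rw [top_adj _ _]
  constructor
  · intro h
    have hne : u ≠ v := fun hq => h (hq ▸ rfl)
    have := hadj (e.symm u) (e.symm v) (fun hq => hne (by
      have := congrArg e hq
      rwa [e.apply_symm_apply, e.apply_symm_apply] at this))
    have hu : e (e.symm u) = u := e.apply_symm_apply u
    have hv : e (e.symm v) = v := e.apply_symm_apply v
    have hxu : x (e.symm u) = u := hu
    have hxv : x (e.symm v) = v := hv
    rwa [hxu, hxv] at this
  · intro h
    intro hq
    have : u = v := by
      have := congrArg e hq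
      rwa [e.apply_symm_apply, e.apply_symm_apply] at this
    exact G.ne_of_adj h this
end

section
/- If G is a 2-connected house-minor-free graph that contains a cycle of length at least 5, then G is itself a cycle (i.e., G is connected and every vertex of G has degree exactly 2). -/
open SimpleGraph

variable {α β : Type*}

/-- The house: a 4-cycle `0-1-2-3-0` plus a vertex `4` adjacent to the two
consecutive vertices `0` and `1`. -/
def houseGraph : SimpleGraph (Fin 5) :=
  fromEdgeSet {s(0, 1), s(1, 2), s(2, 3), s(3, 0), s(4, 0), s(4, 1)}


/-!
Let `C` be a cycle of length at least 5. An ear of `C` (a path between two distinct vertices of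
`C` with no inner vertex on `C`) that is not itself an edge of `C` forms, together with the two arcs
of `C` between its ends, three internally disjoint paths: the longer arc has length at least 3,
and either the ear or the shorter arc has length at least 2. Contracting these paths gives a house.
In a 2-connected graph every vertex off `C` yields such an ear: leave `C` along an edge `u w`, then
return to `C` from `w` avoiding `u`. Once every vertex is on `C`, an edge not on `C` is a chord,
i.e. an ear of length one. Hence a house-minor-free `G` is `C`.
-/

open Set

namespace SimpleGraph

variable {G : SimpleGraph α} {u v x y : α}

namespace Walk

lemma connected_induce_getVert_image_Icc (p : G.Walk u v) {a b : ℕ} (hab : a ≤ b)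
    (hb : b ≤ p.length) : (G.induce (p.getVert '' Icc a b)).Connected := by
  induction b, hab using Nat.le_induction with
  | base => rw [Icc_self, image_singleton, induce_singleton_eq_top]; exact connected_top
  | succ b hab ih =>
    rw [← Order.succ_eq_add_one, ← insert_Icc_right_eq_Icc_succ (hab.trans (Order.le_succ b)),
      image_insert_eq, insert_eq]
    exact connected_induce_union (by simp) (ih (by omega)).preconnected rfl
      (mem_image_of_mem _ ⟨hab, le_rfl⟩) (p.adj_getVert_succ (by omega)).symm

lemma IsPath.disjoint_getVert_image_Icc {p : G.Walk u v} (hp : p.IsPath) {a b c d : ℕ}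
    (hbc : b < c) (hd : d ≤ p.length) :
    Disjoint (p.getVert '' Icc a b) (p.getVert '' Icc c d) := by
  refine disjoint_image_image fun i ⟨_, hib⟩ j ⟨hcj, hjd⟩ hij => ?_
  have := hp.getVert_injOn (by simp only [mem_ofPred_eq]; omega)
    (by simp only [mem_ofPred_eq]; omega) hij
  omega

def InternallyDisjoint (p q : G.Walk u v) : Prop :=
  ∀ w ∈ p.support, w ∈ q.support → w = u ∨ w = v

lemma InternallyDisjoint.symm {p q : G.Walk u v} (h : p.InternallyDisjoint q) :
    q.InternallyDisjoint p :=
  fun w hq hp => h w hp hq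

lemma InternallyDisjoint.disjoint_getVert_image_Icc {p q : G.Walk u v}
    (h : p.InternallyDisjoint q) (hp : p.IsPath) {a b : ℕ} (ha : 0 < a) (hb : b < p.length)
    {J : Set ℕ} : Disjoint (p.getVert '' Icc a b) (q.getVert '' J) := by
  refine disjoint_image_image fun i hi j _ hij => ?_
  obtain ⟨hai, hib⟩ := hi
  rcases h _ (p.getVert_mem_support i) (hij ▸ q.getVert_mem_support j) with hu | hv
  · exact absurd ((hp.getVert_eq_start_iff (by omega)).1 hu) (by omega)
  · exact absurd ((hp.getVert_eq_end_iff (by omega)).1 hv) (by omega)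

lemma IsCycle.exists_internallyDisjoint_arcs {c : G.Walk x x} (hc : c.IsCycle)
    (hu : u ∈ c.support) (hy : y ∈ c.support) (huy : u ≠ y) :
    ∃ A B : G.Walk u y, A.IsPath ∧ B.IsPath ∧ A.InternallyDisjoint B ∧
      A.length + B.length = c.length ∧ A.support ⊆ c.support ∧ B.support ⊆ c.support ∧
      A.edges ⊆ c.edges ∧ B.edges ⊆ c.edges := by
  classical
  set d := c.rotate u hu
  have hd : d.IsCycle := hc.rotate hu
  have hyd : y ∈ d.support := (c.mem_support_rotate_iff u hu).2 hy
  set A := d.takeUntil y hyd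
  set D := d.dropUntil y hyd
  have hAD : A.append D = d := d.take_spec hyd
  have hAnil : ¬ A.Nil := not_nil_of_ne huy
  have hsupp : ∀ w ∈ d.support, w ∈ c.support := fun w => (c.mem_support_rotate_iff u hu).1
  have hedges : ∀ e ∈ d.edges, e ∈ c.edges := fun e => (c.rotate_edges u hu).mem_iff.1
  refine ⟨A, D.reverse, hd.isPath_takeUntil hyd,
    (IsCycle.isPath_of_append_right hAnil (hAD ▸ hd : (A.append D).IsCycle)).reverse,
    fun w hwA hwD => ?_, ?_,
    fun w hw => hsupp w (d.support_takeUntil_subset_support hyd hw),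
    fun w hw => hsupp w (d.support_dropUntil_subset_support hyd (by simpa using hw)),
    fun e he => hedges e (d.edges_takeUntil_subset_edges hyd he),
    fun e he => hedges e (d.edges_dropUntil_subset_edges hyd (by simpa using he))⟩
  · have htails : A.support.tail.Disjoint D.support.tail := by
      have := hd.support_nodup
      rw [← hAD, tail_support_append, List.nodup_append'] at this
      exact this.2.2
    rw [support_reverse, List.mem_reverse, ← cons_tail_support] at hwD
    rw [← cons_tail_support] at hwA
    rcases List.mem_cons.1 hwA with rfl | hwA
    · exact Or.inl rfl
    rcases List.mem_cons.1 hwD with rfl | hwD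
    · exact Or.inr rfl
    exact absurd hwD (htails hwA)
  · rw [length_reverse, ← length_append, hAD, length_rotate]

lemma exists_walk_meeting_set_only_at_end {S : Set α} (p : G.Walk u v) (hv : v ∈ S) :
    ∃ y ∈ S, ∃ q : G.Walk u y,
      (∀ w ∈ q.support, w ≠ y → w ∉ S) ∧ q.support ⊆ p.support := by
  induction p with
  | nil => exact ⟨_, hv, nil, by simp, List.Subset.refl _⟩
  | @cons a b c hab r ih =>
    by_cases ha : a ∈ S
    · exact ⟨a, ha, nil, by simp, by simp⟩
    obtain ⟨y, hy, q, hqS, hqr⟩ := ih hv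
    refine ⟨y, hy, cons hab q, fun w hw hwy => ?_, List.cons_subset_cons _ hqr⟩
    rcases List.mem_cons.1 hw with rfl | hw
    · exact ha
    · exact hqS w hw hwy

structure IsEar (S : Set α) (p : G.Walk u v) : Prop where
  isPath : p.IsPath
  ne : u ≠ v
  start_mem : u ∈ S
  end_mem : v ∈ S
  notMem : ∀ w ∈ p.support, w ≠ u → w ≠ v → w ∉ S

lemma IsEar.internallyDisjoint {S : Set α} {p q : G.Walk u v} (hp : p.IsEar S)
    (hq : ∀ w ∈ q.support, w ∈ S) : p.InternallyDisjoint q := by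
  intro w hwp hwq
  by_contra! h
  exact hp.notMem w hwp h.1 h.2 (hq w hwq)

end Walk

open Walk

lemma Adj.isEar_toWalk {S : Set α} (h : G.Adj u v) (hu : u ∈ S) (hv : v ∈ S) :
    h.toWalk.IsEar S :=
  ⟨h.isPath_toWalk, h.ne, hu, hv, fun w hw hwu hwv => by simp_all⟩

lemma hasMinor_houseGraph_of_branchSets (S : Fin 5 → Set α) (hne : ∀ i, (S i).Nonempty)
    (hdisj : ∀ ⦃i j⦄, i < j → Disjoint (S i) (S j))
    (hconn : ∀ i, (G.induce (S i)).Connected)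
    (h01 : ∃ a ∈ S 0, ∃ b ∈ S 1, G.Adj a b) (h12 : ∃ a ∈ S 1, ∃ b ∈ S 2, G.Adj a b)
    (h23 : ∃ a ∈ S 2, ∃ b ∈ S 3, G.Adj a b) (h30 : ∃ a ∈ S 3, ∃ b ∈ S 0, G.Adj a b)
    (h40 : ∃ a ∈ S 4, ∃ b ∈ S 0, G.Adj a b)
    (h41 : ∃ a ∈ S 4, ∃ b ∈ S 1, G.Adj a b) :
    HasMinor G houseGraph := by
  have symm : ∀ {i j}, (∃ a ∈ S i, ∃ b ∈ S j, G.Adj a b) →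
      ∃ a ∈ S j, ∃ b ∈ S i, G.Adj a b :=
    fun ⟨a, ha, b, hb, hab⟩ => ⟨b, hb, a, ha, hab.symm⟩
  refine ⟨S, hne, (pairwise_disjoint_on S).2 hdisj, hconn, fun i j hij => ?_⟩
  fin_cases i <;> fin_cases j <;> first | assumption | exact symm ‹_› | simp [houseGraph] at hij

lemma hasMinor_houseGraph_of_theta {P Q R : G.Walk x y} (hP : P.IsPath) (hQ : Q.IsPath)
    (hR : R.IsPath) (hPQ : P.InternallyDisjoint Q) (hPR : P.InternallyDisjoint R)
    (hRQ : R.InternallyDisjoint Q) (hPl : 3 ≤ P.length) (hRl : 2 ≤ R.length) :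
    HasMinor G houseGraph := by
  have hxy : x ≠ y := by
    rintro rfl
    rw [length_eq_zero_iff.2 (isPath_iff_nil.1 hP)] at hPl
    omega
  have hQl : 0 < Q.length := Nat.pos_of_ne_zero fun h => hxy (Q.eq_of_length_eq_zero h)
  have hx : x ∈ Q.getVert '' Icc 0 (Q.length - 1) :=
    ⟨0, left_mem_Icc.2 (Nat.zero_le _), Q.getVert_zero⟩
  have hy : y ∈ Q.getVert '' Icc Q.length Q.length :=
    ⟨_, left_mem_Icc.2 le_rfl, Q.getVert_length⟩
  -- Around the square: `Q` without `y`, then `y`, the last inner vertex of `P`, and the other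
  -- inner vertices of `P`; the inner vertices of `R` form the apex.
  refine hasMinor_houseGraph_of_branchSets ![Q.getVert '' Icc 0 (Q.length - 1),
    Q.getVert '' Icc Q.length Q.length, P.getVert '' Icc (P.length - 1) (P.length - 1),
    P.getVert '' Icc 1 (P.length - 2), R.getVert '' Icc 1 (R.length - 1)]
    (fun i => ?_) (fun i j hij => ?_) (fun i => ?_) ?_ ?_ ?_ ?_ ?_ ?_
  · fin_cases i <;> exact (nonempty_Icc.2 (by omega)).image _
  · fin_cases i <;> fin_cases j <;> first
      | exact absurd hij (by decide)
      | exact hQ.disjoint_getVert_image_Icc (by omega) (by omega)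
      | exact (hP.disjoint_getVert_image_Icc (by omega) (by omega)).symm
      | exact (hPQ.disjoint_getVert_image_Icc hP (by omega) (by omega)).symm
      | exact (hRQ.disjoint_getVert_image_Icc hR (by omega) (by omega)).symm
      | exact hPR.disjoint_getVert_image_Icc hP (by omega) (by omega)
  · fin_cases i <;> exact connected_induce_getVert_image_Icc _ (by omega) (by omega)
  · exact ⟨_, mem_image_of_mem _ (right_mem_Icc.2 (Nat.zero_le _)), y, hy,
      Q.adj_penultimate (not_nil_of_ne hxy)⟩
  · exact ⟨y, hy, _, mem_image_of_mem _ (left_mem_Icc.2 le_rfl),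
      (P.adj_penultimate (not_nil_of_ne hxy)).symm⟩
  · have h2 : P.length - 2 + 1 ∈ Icc (P.length - 1) (P.length - 1) := ⟨by omega, by omega⟩
    exact ⟨_, mem_image_of_mem _ h2, _, mem_image_of_mem _ (right_mem_Icc.2 (by omega)),
      (P.adj_getVert_succ (by omega)).symm⟩
  · exact ⟨_, mem_image_of_mem _ (left_mem_Icc.2 (by omega)), x, hx,
      (P.adj_snd (not_nil_of_ne hxy)).symm⟩
  · exact ⟨_, mem_image_of_mem _ (left_mem_Icc.2 (by omega)), x, hx,
      (R.adj_snd (not_nil_of_ne hxy)).symm⟩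
  · exact ⟨_, mem_image_of_mem _ (right_mem_Icc.2 (by omega)), y, hy,
      R.adj_penultimate (not_nil_of_ne hxy)⟩

lemma hasMinor_houseGraph_of_isEar {c : G.Walk x x} (hc : c.IsCycle) (hlen : 5 ≤ c.length)
    {p : G.Walk u y} (hp : p.IsEar {w | w ∈ c.support})
    (hchord : p.length = 1 → s(u, y) ∉ c.edges) :
    HasMinor G houseGraph := by
  obtain ⟨A, B, hA, hB, hAB, hlenAB, hAc, hBc, hAe, hBe⟩ :=
    hc.exists_internallyDisjoint_arcs hp.start_mem hp.end_mem hp.ne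
  wlog hBA : B.length ≤ A.length generalizing A B
  · exact this B A hB hA hAB.symm (by omega) hBc hAc hBe hAe (by omega)
  have hpA := hp.internallyDisjoint hAc
  have hpB := hp.internallyDisjoint hBc
  rcases Nat.lt_or_ge 1 p.length with hpl | hpl
  · exact hasMinor_houseGraph_of_theta hA hB hp.isPath hAB hpA.symm hpB (by omega) hpl
  · have hp1 : p.length = 1 := le_antisymm hpl (not_nil_iff_lt_length.1 (not_nil_of_ne hp.ne))
    have hB2 : 2 ≤ B.length := by
      by_contra! hB1
      have hBy : B.snd = y := B.getVert_of_length_le (by omega)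
      have hBe1 := B.mk_start_snd_mem_edges (not_nil_of_ne hp.ne)
      rw [hBy] at hBe1
      exact hchord hp1 (hBe hBe1)
    exact hasMinor_houseGraph_of_theta hA hp.isPath hB hpA.symm hAB hpB.symm (by omega) hB2

lemma exists_isEar_of_notMem {S : Set α} (hS : S.Nontrivial) (hconn : G.Connected)
    (hdel : ∀ v, (G.induce {w | w ≠ v}).Connected) {v : α} (hv : v ∉ S) :
    ∃ u y, ∃ p : G.Walk u y, p.IsEar S ∧ 2 ≤ p.length := by
  classical
  obtain ⟨s, hs⟩ := hS.nonempty
  obtain ⟨⟨⟨u, w⟩, huw⟩, -, hu, hw⟩ :=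
    (hconn.preconnected s v).some.exists_boundary_dart S hs hv
  dsimp only at huw hu hw
  obtain ⟨t, ht, htu⟩ := hS.exists_ne u
  have hwu : w ≠ u := fun h => hw (h ▸ hu)
  obtain ⟨q⟩ := (hdel u).preconnected ⟨w, hwu⟩ ⟨t, htu⟩
  have hq : u ∉ (q.map (Embedding.induce _).toHom).support := by
    rw [Walk.support_map, List.mem_map]
    rintro ⟨⟨z, hz⟩, -, hzu⟩
    exact hz hzu
  obtain ⟨y, hy, r, hrS, hrq⟩ :=
    (show G.Walk w t from q.map (Embedding.induce _).toHom).exists_walk_meeting_set_only_at_end ht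
  have hur : u ∉ r.bypass.support := fun h => hq (hrq (r.support_bypass_subset_support h))
  refine ⟨u, y, cons huw r.bypass,
    ⟨(cons_isPath_iff _ _).2 ⟨r.bypass_isPath, hur⟩,
      by rintro rfl; exact hur (end_mem_support _), hu, hy, fun z hz hzu hzy => ?_⟩, ?_⟩
  · rcases List.mem_cons.1 hz with rfl | hz
    · exact absurd rfl hzu
    · exact hrS z (r.support_bypass_subset_support hz) hzy
  · have hwy : w ≠ y := fun h => hw (h ▸ hy)
    have : r.bypass.length ≠ 0 := fun h => hwy (r.bypass.eq_of_length_eq_zero h)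
    rw [Walk.length_cons]
    omega

end SimpleGraph

/-- If `G` is a 2-connected house-minor-free graph containing a cycle of length at
least 5, then `G` is a cycle (connected and 2-regular). -/
theorem twoConnected_house_minor_free (G : SimpleGraph α) [Fintype α]
    (h2 : TwoConnected G) (hfree : ¬ HasMinor G houseGraph)
    (hcyc : ∃ (x : α) (c : G.Walk x x), c.IsCycle ∧ 5 ≤ c.length) :
    IsCycleGraph G := by
  obtain ⟨-, hconn, hdel⟩ := h2
  obtain ⟨x, c, hc, hlen⟩ := hcyc
  have hsupp : ∀ v, v ∈ c.support := by
    by_contra! ⟨v, hv⟩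
    have hS : {w | w ∈ c.support}.Nontrivial := ⟨x, c.start_mem_support, c.snd,
      List.mem_of_mem_tail (c.snd_mem_tail_support hc.not_nil), (c.adj_snd hc.not_nil).ne⟩
    obtain ⟨u, y, p, hp, hp2⟩ := exists_isEar_of_notMem hS hconn hdel hv
    exact hfree (hasMinor_houseGraph_of_isEar hc hlen hp (by omega))
  have hedges : ∀ a b, G.Adj a b → s(a, b) ∈ c.edges := by
    by_contra! ⟨a, b, hab, hne⟩
    exact hfree (hasMinor_houseGraph_of_isEar hc hlen (hab.isEar_toWalk (hsupp a) (hsupp b))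
      fun _ => hne)
  refine ⟨hconn, fun v => ?_⟩
  have hnbr : G.neighborSet v = c.toSubgraph.neighborSet v := by
    ext w
    exact ⟨fun h => Walk.adj_toSubgraph_iff_mem_edges.2 (hedges _ _ h), fun h => h.adj_sub⟩
  rw [hnbr]
  exact hc.ncard_neighborSet_toSubgraph_eq_two (hsupp v)
end

section
/- Every connected paw-minor-free graph is either a cycle (connected and 2-regular) or a tree (connected and acyclic). -/
/-!
Suppose `G` is not a tree, so some vertex `x` lies on a cycle, entering it from neighbour `a`
and leaving to neighbour `b`. A third neighbour `y` of `x` gives a paw minor: if `y` is off the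
cycle, contract the cycle to a triangle at `x` with pendant `y`; if `y` is on it, the chord `xy`
and one arc of the cycle form a triangle, and the other cycle-neighbour of `x` is the pendant.
Hence every vertex on a cycle has degree exactly `2`, and its neighbours lie on the same cycle;
by connectivity every vertex lies on a cycle, so `G` is `2`-regular.
-/

open SimpleGraph

variable {α β : Type*}

/-- The paw: a triangle `0,1,2` together with one additional vertex `3` adjacent to
exactly one vertex of the triangle. -/
def pawGraph : SimpleGraph (Fin 4) :=
  fromEdgeSet {s(0, 1), s(0, 2), s(1, 2), s(2, 3)}

namespace SimpleGraph

open Walk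

variable {G : SimpleGraph α}

theorem hasMinor_pawGraph_of_model {W : Fin 4 → Set α} (hne : ∀ i, (W i).Nonempty)
    (hdisj : Pairwise fun i j => Disjoint (W i) (W j)) (hconn : ∀ i, (G.induce (W i)).Connected)
    (h01 : ∃ x ∈ W 0, ∃ y ∈ W 1, G.Adj x y) (h02 : ∃ x ∈ W 0, ∃ y ∈ W 2, G.Adj x y)
    (h12 : ∃ x ∈ W 1, ∃ y ∈ W 2, G.Adj x y) (h23 : ∃ x ∈ W 2, ∃ y ∈ W 3, G.Adj x y) :
    HasMinor G pawGraph := by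
  have symm : ∀ {i j : Fin 4}, (∃ x ∈ W i, ∃ y ∈ W j, G.Adj x y) →
      ∃ x ∈ W j, ∃ y ∈ W i, G.Adj x y := fun ⟨x, hx, y, hy, h⟩ => ⟨y, hy, x, hx, h.symm⟩
  refine ⟨W, hne, hdisj, hconn, fun i j hij => ?_⟩
  simp only [pawGraph, fromEdgeSet_adj, Set.mem_insert_iff, Set.mem_singleton_iff] at hij
  fin_cases i <;> fin_cases j <;>
    first | assumption | exact symm (by assumption) | exact absurd hij (by decide)

/-- The triangle is `c`, the support of `q`, and `x`; the pendant vertex is `z`. -/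
theorem hasMinor_pawGraph_of_walk {c d e x z : α} (q : G.Walk d e) (hcd : G.Adj c d)
    (hxc : G.Adj x c) (hxe : G.Adj x e) (hxz : G.Adj x z) (hzc : z ≠ c)
    (hc : c ∉ q.support) (hx : x ∉ q.support) (hz : z ∉ q.support) :
    HasMinor G pawGraph := by
  have hS : {v | v ∈ q.support}.Nonempty := ⟨d, q.start_mem_support⟩
  apply hasMinor_pawGraph_of_model (W := ![{c}, {v | v ∈ q.support}, {x}, {z}])
  · intro i
    fin_cases i <;> simp [hS]
  · intro i j hij
    fin_cases i <;> fin_cases j <;>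
      simp_all [hxc.ne, hxz.ne, hxz.ne.symm, hxc.ne.symm, hzc.symm]
  · intro i
    fin_cases i <;> simp [connected_top, q.connected_induce_support]
  · exact ⟨c, rfl, d, q.start_mem_support, hcd⟩
  · exact ⟨c, rfl, x, rfl, hxc.symm⟩
  · exact ⟨e, q.end_mem_support, x, rfl, hxe.symm⟩
  · exact ⟨x, rfl, z, rfl, hxz⟩

/-- `x` has two distinct neighbours joined by a path avoiding `x`; equivalently, `x` lies on a
cycle. -/
def LiesOnCycle (G : SimpleGraph α) (x : α) : Prop :=
  ∃ a b, a ≠ b ∧ G.Adj x a ∧ G.Adj x b ∧ ∃ r : G.Walk a b, r.IsPath ∧ x ∉ r.support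

theorem exists_liesOnCycle_of_not_isAcyclic (h : ¬ G.IsAcyclic) : ∃ x, G.LiesOnCycle x := by
  simp only [IsAcyclic, not_forall, not_not] at h
  obtain ⟨x, c, hc⟩ := h
  obtain ⟨b, hxb, q, rfl⟩ := Walk.not_nil_iff.mp hc.not_nil
  obtain ⟨hq, hxbq⟩ := (cons_isCycle_iff q hxb).mp hc
  obtain ⟨a, hxa, r, hr⟩ := Walk.not_nil_iff.mp (q.reverse.not_nil_of_ne hxb.ne)
  have hpath := hq.reverse
  rw [hr, cons_isPath_iff] at hpath
  refine ⟨x, a, b, ?_, hxa, hxb, r, hpath⟩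
  rintro rfl
  apply hxbq
  have hedge : s(x, a) ∈ q.reverse.edges := by simp [hr]
  simpa using hedge

theorem eq_or_eq_of_adj_of_isPath (hfree : ¬ HasMinor G pawGraph) {a b x y : α} (hab : a ≠ b)
    (hxa : G.Adj x a) (hxb : G.Adj x b) (r : G.Walk a b) (hr : r.IsPath) (hx : x ∉ r.support)
    (hxy : G.Adj x y) : y = a ∨ y = b := by
  by_contra! hy
  by_cases hyr : y ∈ r.support
  · obtain ⟨p, q, -, hq, rfl⟩ := hr.mem_support_iff_exists_append.mp hyr
    cases q with
    | nil => exact hy.2 rfl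
    | cons hyd s =>
      have hnodup := hr.support_nodup
      simp only [support_append, support_cons, List.tail_cons] at hnodup
      refine hfree (hasMinor_pawGraph_of_walk s hyd hxy hxb hxa (Ne.symm hy.1) ?_ ?_ ?_)
      · exact ((cons_isPath_iff hyd s).mp hq).2
      · simp_all
      · exact List.disjoint_of_nodup_append hnodup p.start_mem_support
  · cases r with
    | nil => exact hab rfl
    | cons had s =>
      simp only [support_cons, List.mem_cons, not_or] at hx hyr
      exact hfree (hasMinor_pawGraph_of_walk s had hxa hxb hxy hy.1
        ((cons_isPath_iff had s).mp hr).2 hx.2 hyr.2)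

theorem liesOnCycle_of_isPath {a b x : α} (hab : a ≠ b) (hxa : G.Adj x a) (hxb : G.Adj x b)
    (r : G.Walk a b) (hr : r.IsPath) (hx : x ∉ r.support) : G.LiesOnCycle a := by
  cases r with
  | nil => exact absurd rfl hab
  | cons had s =>
    obtain ⟨hs, has⟩ := (cons_isPath_iff had s).mp hr
    simp only [support_cons, List.mem_cons, not_or] at hx
    refine ⟨x, _, ?_, hxa.symm, had, cons hxb s.reverse, ?_, ?_⟩
    · rintro rfl
      exact hx.2 s.start_mem_support
    · exact (cons_isPath_iff hxb _).mpr ⟨hs.reverse, by simpa using hx.2⟩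
    · simpa [has] using hxa.ne'

theorem LiesOnCycle.of_adj (hfree : ¬ HasMinor G pawGraph) {x y : α} (hx : G.LiesOnCycle x)
    (hxy : G.Adj x y) : G.LiesOnCycle y := by
  obtain ⟨a, b, hab, hxa, hxb, r, hr, hxr⟩ := hx
  rcases eq_or_eq_of_adj_of_isPath hfree hab hxa hxb r hr hxr hxy with rfl | rfl
  · exact liesOnCycle_of_isPath hab hxa hxb r hr hxr
  · exact liesOnCycle_of_isPath hab.symm hxb hxa r.reverse hr.reverse (by simpa using hxr)

theorem LiesOnCycle.ncard_neighborSet (hfree : ¬ HasMinor G pawGraph) {x : α}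
    (hx : G.LiesOnCycle x) : (G.neighborSet x).ncard = 2 := by
  obtain ⟨a, b, hab, hxa, hxb, r, hr, hxr⟩ := hx
  have hN : G.neighborSet x = {a, b} := by
    ext y
    refine ⟨fun hxy => eq_or_eq_of_adj_of_isPath hfree hab hxa hxb r hr hxr hxy, ?_⟩
    rintro (rfl | rfl)
    exacts [hxa, hxb]
  rw [hN, Set.ncard_pair hab]

theorem Connected.forall_of_adj_imp {P : α → Prop} (hG : G.Connected)
    (hP : ∀ x y, G.Adj x y → P x → P y) {x : α} (hx : P x) (y : α) : P y := by
  obtain ⟨p⟩ := hG.preconnected x y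
  induction p with
  | nil => exact hx
  | cons h _ ih => exact ih (hP _ _ h hx)

end SimpleGraph

theorem connected_paw_minor_free_general (G : SimpleGraph α)
    (hconn : G.Connected) (hfree : ¬ HasMinor G pawGraph) :
    IsCycleGraph G ∨ G.IsTree := by
  by_cases hac : G.IsAcyclic
  · exact Or.inr ⟨hconn, hac⟩
  obtain ⟨x, hx⟩ := exists_liesOnCycle_of_not_isAcyclic hac
  have hall := hconn.forall_of_adj_imp (fun _ _ hadj h => h.of_adj hfree hadj) hx
  exact Or.inl ⟨hconn, fun v => (hall v).ncard_neighborSet hfree⟩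

/-- Every connected paw-minor-free graph is either a cycle (connected and 2-regular)
or a tree (connected and acyclic). -/
theorem connected_paw_minor_free (G : SimpleGraph α) [Fintype α]
    (hconn : G.Connected) (hfree : ¬ HasMinor G pawGraph) :
    IsCycleGraph G ∨ G.IsTree :=
  connected_paw_minor_free_general G hconn hfree
end

section
/- Let H be a 2-connected graph, let e = uv be an edge of H, and let H⁻ = H − e. For every k ≥ 1, the graph P_k(H⁻) obtained from k pairwise disjoint copies H⁻_1, ..., H⁻_k of H⁻ by identifying, for each 1 ≤ i ≤ k−1, the copy of v in H⁻_i with the copy of u in H⁻_{i+1}, is H-minor-free. -/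
/-!
Level the vertices of `P_k(H⁻)`: the `j`-th copy of `u` gets level `2j`, the last copy of `v`
level `2k`, and every other vertex of the `j`-th copy level `2j + 1`. Levels change by at most
one along edges and each even level is a single cut vertex `c`. In a model of `H`, a branch set
avoiding `c` lies on one side of `c`; as `H` minus the branch vertex of `c` is connected, no
branch set can lie strictly below `c` while another lies strictly above it. Hence some copy,
the levels `[2i, 2i + 2]`, is met by every branch set, and every edge between two branch sets
lies in it. That copy has `|H|` vertices, so it meets each branch set exactly once, and these
representatives span a copy of `H` in `H⁻`, which has one edge fewer.
-/

open SimpleGraph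

variable {α β : Type*}

/-- The graph `P_k(H⁻)` obtained from `k` disjoint copies of `H⁻ = H − uv` by
identifying, for each `0 ≤ i < k - 1`, the copy of `v` in the `i`-th copy with the
copy of `u` in the `(i+1)`-st copy.  A vertex `Sum.inl (i, a)` (with `a ≠ v`) is the
vertex `a` of the `i`-th copy (so `Sum.inl (i+1, u)` is also the vertex `v` of the
`i`-th copy), and `Sum.inr ()` is the vertex `v` of the last copy. -/
def pathOfCopies (H : SimpleGraph α) (u v : α) (k : ℕ) :
    SimpleGraph ((Fin k × {a : α // a ≠ v}) ⊕ Unit) :=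
  SimpleGraph.fromRel fun x y =>
    match x, y with
    | Sum.inl (i, a), Sum.inl (j, b) =>
        (i = j ∧ (H.deleteEdges {s(u, v)}).Adj (a : α) (b : α)) ∨
        ((j : ℕ) = (i : ℕ) + 1 ∧ (b : α) = u ∧ (H.deleteEdges {s(u, v)}).Adj (a : α) v)
    | Sum.inl (i, a), Sum.inr _ =>
        (i : ℕ) = k - 1 ∧ (H.deleteEdges {s(u, v)}).Adj (a : α) v
    | Sum.inr _, _ => False


section

variable {γ δ : Type*} {G : SimpleGraph γ} {H : SimpleGraph β} {V : β → Set γ} {f : γ → ℕ}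

namespace SimpleGraph

theorem Preconnected.exists_apply_eq (hG : G.Preconnected)
    (hf : ∀ x y, G.Adj x y → f y ≤ f x + 1) {x y : γ} {m : ℕ} (hxm : f x ≤ m) (hmy : m ≤ f y) :
    ∃ z, f z = m := by
  rcases hxm.eq_or_lt with hxm | hxm
  · exact ⟨x, hxm⟩
  obtain ⟨W⟩ := hG x y
  obtain ⟨d, -, hd₁, hd₂⟩ := W.exists_boundary_dart {z | f z < m} hxm (by simpa using hmy)
  have := hf _ _ d.adj
  exact ⟨d.snd, by simp only [Set.mem_ofPred_eq, not_lt] at hd₁ hd₂; omega⟩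

theorem Connected.exists_mem_apply_eq_of_induce {S : Set γ} (hS : (G.induce S).Connected)
    (hf : ∀ x y, G.Adj x y → f y ≤ f x + 1) {x y : γ} (hx : x ∈ S) (hy : y ∈ S) {m : ℕ}
    (hxm : f x ≤ m) (hmy : m ≤ f y) : ∃ z ∈ S, f z = m := by
  obtain ⟨z, hz⟩ := hS.preconnected.exists_apply_eq (f := fun z : S => f z)
    (fun _ _ h => hf _ _ h) (x := ⟨x, hx⟩) (y := ⟨y, hy⟩) hxm hmy
  exact ⟨z, z.2, hz⟩

theorem Connected.exists_mem_Icc_of_induce {S : Set γ} (hS : (G.induce S).Connected)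
    (hf : ∀ x y, G.Adj x y → f y ≤ f x + 1) {a b : ℕ} (hab : a ≤ b)
    (ha : ∃ x ∈ S, a ≤ f x) (hb : ∃ x ∈ S, f x ≤ b) : ∃ z ∈ S, a ≤ f z ∧ f z ≤ b := by
  obtain ⟨x, hx, hax⟩ := ha
  obtain ⟨y, hy, hyb⟩ := hb
  by_cases hxb : f x ≤ b
  · exact ⟨x, hx, hax, hxb⟩
  obtain ⟨z, hz, rfl⟩ := hS.exists_mem_apply_eq_of_induce hf hy hx hyb (by omega)
  exact ⟨z, hz, hab, le_rfl⟩

theorem not_isContained_of_lt [Finite γ] {G₁ G₂ : SimpleGraph γ} (h : G₁ < G₂) : ¬ G₂ ⊑ G₁ := by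
  rintro ⟨φ⟩
  have hle := Nat.card_le_card_of_injective _ φ.mapEdgeSet.injective
  have hlt := Set.ncard_lt_ncard (edgeSet_ssubset_edgeSet.2 h)
  rw [Nat.card_coe_set_eq, Nat.card_coe_set_eq] at hle
  omega

end SimpleGraph

namespace IsMinorModel

theorem eq_of_mem_of_mem (hV : IsMinorModel G H V) {b b' : β} {x : γ} (hb : x ∈ V b)
    (hb' : x ∈ V b') : b = b' := by
  by_contra hne
  exact Set.disjoint_left.mp (hV.2.1 hne) hb hb'

theorem le_of_adj_of_ne (hV : IsMinorModel G H V) (hf : ∀ x y, G.Adj x y → f y ≤ f x + 1)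
    {a : ℕ} {c : γ} (hc : ∀ x, f x = a → x = c) (hmeet : ∀ b, ∃ x ∈ V b, a ≤ f x)
    {b b' : β} (hbb' : b ≠ b') {x y : γ} (hx : x ∈ V b) (hy : y ∈ V b') (hxy : G.Adj x y) :
    a ≤ f x := by
  by_contra! hxa
  obtain ⟨x', hx', hax'⟩ := hmeet b
  obtain ⟨y', hy', hay'⟩ := hmeet b'
  obtain ⟨z, hz, hza⟩ := (hV.2.2.1 b).exists_mem_apply_eq_of_induce hf hx hx' hxa.le hax'
  obtain ⟨z', hz', hz'a⟩ :=
    (hV.2.2.1 b').exists_mem_apply_eq_of_induce hf hy hy' (by linarith [hf x y hxy]) hay'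
  rw [hc z hza] at hz
  rw [hc z' hz'a] at hz'
  exact hbb' (hV.eq_of_mem_of_mem hz hz')

theorem ge_of_adj_of_ne (hV : IsMinorModel G H V) (hf : ∀ x y, G.Adj x y → f y ≤ f x + 1)
    {a : ℕ} {c : γ} (hc : ∀ x, f x = a → x = c) (hmeet : ∀ b, ∃ x ∈ V b, f x ≤ a)
    {b b' : β} (hbb' : b ≠ b') {x y : γ} (hx : x ∈ V b) (hy : y ∈ V b') (hxy : G.Adj x y) :
    f x ≤ a := by
  by_contra! hax
  obtain ⟨x', hx', hx'a⟩ := hmeet b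
  obtain ⟨y', hy', hy'a⟩ := hmeet b'
  obtain ⟨z, hz, hza⟩ := (hV.2.2.1 b).exists_mem_apply_eq_of_induce hf hx' hx hx'a hax.le
  obtain ⟨z', hz', hz'a⟩ :=
    (hV.2.2.1 b').exists_mem_apply_eq_of_induce hf hy' hy hy'a (by linarith [hf y x hxy.symm])
  rw [hc z hza] at hz
  rw [hc z' hz'a] at hz'
  exact hbb' (hV.eq_of_mem_of_mem hz hz')

theorem exists_ne_ne_forall_level_eq [Fintype β] (hV : IsMinorModel G H V)
    (hH : 3 ≤ Fintype.card β) {m : ℕ} {c : γ} (hc : ∀ x, f x = m → x = c) {b₁ b₂ : β}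
    (h₁ : ∀ x ∈ V b₁, f x ≠ m) (h₂ : ∀ x ∈ V b₂, f x ≠ m) :
    ∃ b₀, b₀ ≠ b₁ ∧ b₀ ≠ b₂ ∧ ∀ b, ∀ x ∈ V b, f x = m → b = b₀ := by
  classical
  by_cases hex : ∃ b₀, ∃ x₀ ∈ V b₀, f x₀ = m
  · obtain ⟨b₀, x₀, hx₀, hx₀m⟩ := hex
    refine ⟨b₀, fun h => h₁ x₀ (h ▸ hx₀) hx₀m, fun h => h₂ x₀ (h ▸ hx₀) hx₀m,
      fun b x hx hxm => ?_⟩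
    rw [hc x hxm] at hx
    rw [hc x₀ hx₀m] at hx₀
    exact hV.eq_of_mem_of_mem hx hx₀
  · push Not at hex
    have hcard : 1 < (Finset.univ.erase b₁).card := by
      rw [Finset.card_erase_of_mem (Finset.mem_univ _), Finset.card_univ]
      omega
    obtain ⟨b₀, hb₀, hb₀₂⟩ := Finset.exists_mem_ne hcard b₂
    exact ⟨b₀, Finset.ne_of_mem_erase hb₀, hb₀₂, fun b x hx hxm => (hex b x hx hxm).elim⟩

theorem forall_exists_le_or_forall_exists_ge [Fintype β] (hV : IsMinorModel G H V)
    (hH : TwoConnected H) (hf : ∀ x y, G.Adj x y → f y ≤ f x + 1) {m : ℕ} {c : γ}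
    (hc : ∀ x, f x = m → x = c) :
    (∀ b, ∃ x ∈ V b, f x ≤ m) ∨ ∀ b, ∃ x ∈ V b, m ≤ f x := by
  by_contra! ⟨⟨bHi, hHi⟩, ⟨bLo, hLo⟩⟩
  obtain ⟨b₀, hb₀Hi, hb₀Lo, hb₀⟩ := hV.exists_ne_ne_forall_level_eq hH.1 hc
    (fun x hx => (hHi x hx).ne') (fun x hx => (hLo x hx).ne)
  -- An edge of `H - b₀` leaving the branch sets that lie below `m` ends in a branch set that
  -- crosses level `m`, hence contains the level-`m` vertex and is `b₀`.
  obtain ⟨W⟩ := (hH.2.2 b₀).preconnected ⟨bLo, hb₀Lo.symm⟩ ⟨bHi, hb₀Hi.symm⟩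
  obtain ⟨d, -, hd₁, hd₂⟩ := W.exists_boundary_dart {b | ∀ x ∈ V b, f x < m} hLo
    (fun h => by obtain ⟨x, hx⟩ := hV.1 bHi; exact (h x hx).not_gt (hHi x hx))
  obtain ⟨x, hx, y, hy, hxy⟩ := hV.2.2.2 _ _ d.adj
  simp only [Set.mem_ofPred_eq, not_forall, not_lt] at hd₁ hd₂
  obtain ⟨y', hy', hmy'⟩ := hd₂
  obtain ⟨z, hz, hzm⟩ := (hV.2.2.1 _).exists_mem_apply_eq_of_induce hf hy hy'
    (by linarith [hf x y hxy, hd₁ x hx]) hmy'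
  exact d.snd.2 (hb₀ _ z hz hzm)

theorem exists_forall_exists_mem_window [Fintype β] (hV : IsMinorModel G H V)
    (hH : TwoConnected H) (hf : ∀ x y, G.Adj x y → f y ≤ f x + 1) {k : ℕ} (hk : 1 ≤ k)
    (hfk : ∀ x, f x ≤ 2 * k) {c : ℕ → γ} (hc : ∀ j x, f x = 2 * j → x = c j) :
    ∃ i < k, ∀ b, ∃ x ∈ V b, 2 * i ≤ f x ∧ f x ≤ 2 * i + 2 := by
  classical
  let R j := ∀ b, ∃ x ∈ V b, 2 * j ≤ f x
  have hR0 : R 0 := fun b => (hV.1 b).imp fun x hx => ⟨hx, Nat.zero_le _⟩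
  set i := Nat.findGreatest R (k - 1)
  have hup : ∀ b, ∃ x ∈ V b, f x ≤ 2 * i + 2 := by
    by_cases hik : i + 1 < k
    · refine (hV.forall_exists_le_or_forall_exists_ge hH hf (hc (i + 1))).resolve_right
        fun hRi => ?_
      exact Nat.findGreatest_is_greatest (Nat.lt_succ_self i) (by omega) hRi
    · exact fun b => (hV.1 b).imp fun x hx => ⟨hx, by linarith [hfk x]⟩
  refine ⟨i, (Nat.findGreatest_le (k - 1)).trans_lt (by omega), fun b => ?_⟩
  exact (hV.2.2.1 b).exists_mem_Icc_of_induce hf (by omega)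
    (Nat.findGreatest_spec (Nat.zero_le _) hR0 b) (hup b)

theorem exists_injective_adj [Fintype β] [Fintype δ] (hV : IsMinorModel G H V) (e : δ → γ)
    (hcard : Fintype.card δ ≤ Fintype.card β) (hmeet : ∀ b, ∃ d, e d ∈ V b)
    (hcross : ∀ b b' x y, H.Adj b b' → x ∈ V b → y ∈ V b' → G.Adj x y → x ∈ Set.range e) :
    ∃ ψ : β → δ, Function.Injective ψ ∧ ∀ b b', H.Adj b b' → G.Adj (e (ψ b)) (e (ψ b')) := by
  choose ψ hψ using hmeet
  have hinj : Function.Injective ψ := fun b b' h => hV.eq_of_mem_of_mem (hψ b) (h ▸ hψ b')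
  have hsurj : Function.Surjective ψ := ((Fintype.bijective_iff_injective_and_card ψ).2
    ⟨hinj, (Fintype.card_le_of_injective ψ hinj).antisymm hcard⟩).2
  have hrep : ∀ b b' x y, H.Adj b b' → x ∈ V b → y ∈ V b' → G.Adj x y → x = e (ψ b) := by
    intro b b' x y hbb' hx hy hxy
    obtain ⟨d, rfl⟩ := hcross b b' x y hbb' hx hy hxy
    obtain ⟨b'', rfl⟩ := hsurj d
    rw [hV.eq_of_mem_of_mem hx (hψ b'')]
  refine ⟨ψ, hinj, fun b b' hbb' => ?_⟩
  obtain ⟨x, hx, y, hy, hxy⟩ := hV.2.2.2 b b' hbb'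
  rw [← hrep b b' x y hbb' hx hy hxy, ← hrep b' b y x hbb'.symm hy hx hxy.symm]
  exact hxy

end IsMinorModel

end

namespace pathOfCopies

variable {H : SimpleGraph α} {u v : α} {k : ℕ}

theorem adj_inl_inl {i j : Fin k} {a b : {a : α // a ≠ v}} :
    (pathOfCopies H u v k).Adj (.inl (i, a)) (.inl (j, b)) ↔
      (i = j ∧ (H.deleteEdges {s(u, v)}).Adj a b) ∨
      ((j : ℕ) = i + 1 ∧ (b : α) = u ∧ (H.deleteEdges {s(u, v)}).Adj a v) ∨
      ((i : ℕ) = j + 1 ∧ (a : α) = u ∧ (H.deleteEdges {s(u, v)}).Adj b v) := by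
  simp only [pathOfCopies, fromRel_adj]
  constructor
  · rintro ⟨-, (h | h) | (⟨rfl, h⟩ | h)⟩
    exacts [Or.inl h, Or.inr (Or.inl h), Or.inl ⟨rfl, h.symm⟩, Or.inr (Or.inr h)]
  · rintro (h | h | h)
    · exact ⟨by grind [h.2.ne], Or.inl (Or.inl h)⟩
    · exact ⟨by grind, Or.inl (Or.inr h)⟩
    · exact ⟨by grind, Or.inr (Or.inr h)⟩

theorem adj_inl_inr {i : Fin k} {a : {a : α // a ≠ v}} {t : Unit} :
    (pathOfCopies H u v k).Adj (.inl (i, a)) (.inr t) ↔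
      (i : ℕ) = k - 1 ∧ (H.deleteEdges {s(u, v)}).Adj a v := by
  simp [pathOfCopies]

theorem not_adj_inr_inr {s t : Unit} : ¬ (pathOfCopies H u v k).Adj (.inr s) (.inr t) := by
  simp [pathOfCopies]

def cut (huv : u ≠ v) (j : ℕ) : (Fin k × {a : α // a ≠ v}) ⊕ Unit :=
  if h : j < k then .inl (⟨j, h⟩, ⟨u, huv⟩) else .inr ()

theorem cut_of_lt (huv : u ≠ v) {j : ℕ} (hj : j < k) :
    (cut huv j : (Fin k × {a : α // a ≠ v}) ⊕ Unit) = .inl (⟨j, hj⟩, ⟨u, huv⟩) :=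
  dif_pos hj

variable [DecidableEq α]

def level (u : α) : (Fin k × {a : α // a ≠ v}) ⊕ Unit → ℕ
  | .inl (j, a) => if (a : α) = u then 2 * j else 2 * j + 1
  | .inr _ => 2 * k

theorem level_le (x : (Fin k × {a : α // a ≠ v}) ⊕ Unit) : level u x ≤ 2 * k := by
  rcases x with ⟨j, a⟩ | t
  · have := j.isLt
    simp only [level]
    split_ifs <;> omega
  · rfl

theorem level_le_level_add_one {x y : (Fin k × {a : α // a ≠ v}) ⊕ Unit}
    (hxy : (pathOfCopies H u v k).Adj x y) : level u y ≤ level u x + 1 := by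
  have hne_u {a : α} (ha : (H.deleteEdges {s(u, v)}).Adj a v) : a ≠ u := by
    rintro rfl
    simp at ha
  rcases x with ⟨i, a⟩ | s <;> rcases y with ⟨j, b⟩ | t
  · simp only [level]
    rcases adj_inl_inl.1 hxy with ⟨rfl, -⟩ | ⟨hj, hb, ha⟩ | ⟨hi, ha, hb⟩
    · split_ifs <;> omega
    · simp only [if_pos hb, if_neg (hne_u ha)]
      omega
    · simp only [if_pos ha, if_neg (hne_u hb)]
      omega
  · obtain ⟨hi, ha⟩ := adj_inl_inr.1 hxy
    have := i.isLt
    simp only [level, if_neg (hne_u ha)]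
    omega
  · exact (level_le _).trans (Nat.le_succ _)
  · exact (not_adj_inr_inr hxy).elim

theorem eq_cut_of_level_eq (huv : u ≠ v) {j : ℕ} {x : (Fin k × {a : α // a ≠ v}) ⊕ Unit}
    (hx : level u x = 2 * j) : x = cut huv j := by
  rcases x with ⟨i, a⟩ | t
  · simp only [level] at hx
    split_ifs at hx with ha
    · have hij : (i : ℕ) = j := by omega
      rw [cut, dif_pos (hij ▸ i.isLt)]
      congr
      exacts [Fin.ext hij, Subtype.ext ha]
    · omega
  · rw [cut, dif_neg (by simp only [level] at hx; omega)]

def copy (huv : u ≠ v) {i : ℕ} (hi : i < k) (a : α) : (Fin k × {a : α // a ≠ v}) ⊕ Unit :=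
  if h : a = v then cut huv (i + 1) else .inl (⟨i, hi⟩, ⟨a, h⟩)

theorem mem_range_copy (huv : u ≠ v) {i : ℕ} (hi : i < k)
    {x : (Fin k × {a : α // a ≠ v}) ⊕ Unit} (h₁ : 2 * i ≤ level u x) (h₂ : level u x ≤ 2 * i + 2) :
    x ∈ Set.range (copy huv hi) := by
  obtain hx | hx | hx : level u x = 2 * i ∨ level u x = 2 * i + 1 ∨ level u x = 2 * (i + 1) := by
    omega
  · refine ⟨u, ?_⟩
    rw [copy, dif_neg huv, eq_cut_of_level_eq huv hx, cut_of_lt huv hi]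
  · rcases x with ⟨j, a⟩ | t
    · simp only [level] at hx
      split_ifs at hx with ha
      · omega
      obtain rfl : j = ⟨i, hi⟩ := Fin.ext (by dsimp only; omega)
      exact ⟨a, dif_neg a.2⟩
    · simp only [level] at hx
      omega
  · exact ⟨v, by rw [copy, dif_pos rfl, eq_cut_of_level_eq huv hx]⟩

theorem adj_of_adj_copy (huv : u ≠ v) {i : ℕ} (hi : i < k) {a b : α}
    (hab : (pathOfCopies H u v k).Adj (copy huv hi a) (copy huv hi b)) :
    (H.deleteEdges {s(u, v)}).Adj a b := by
  have hv {b : α} (hb : b ≠ v) (h : (pathOfCopies H u v k).Adj (copy huv hi v) (copy huv hi b)) :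
      (H.deleteEdges {s(u, v)}).Adj v b := by
    rw [copy, copy, dif_pos rfl, dif_neg hb, cut] at h
    split_ifs at h with hik
    · rcases adj_inl_inl.1 h with ⟨h, -⟩ | ⟨h, -⟩ | ⟨-, -, h⟩
      · exact absurd (congrArg Fin.val h) (by simp)
      · simp only at h
        omega
      · exact h.symm
    · exact (adj_inl_inr.1 h.symm).2.symm
  by_cases ha : a = v <;> by_cases hb : b = v
  · rw [ha, hb] at hab
    exact (hab.ne rfl).elim
  · exact ha ▸ hv hb (ha ▸ hab)
  · exact hb ▸ (hv ha (hb ▸ hab.symm)).symm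
  · rw [copy, copy, dif_neg ha, dif_neg hb] at hab
    rcases adj_inl_inl.1 hab with ⟨-, h⟩ | ⟨h, -⟩ | ⟨h, -⟩
    · exact h
    all_goals omega

end pathOfCopies

open pathOfCopies

/-- For a 2-connected graph `H` with an edge `uv`, the path of `k ≥ 1` copies of
`H⁻ = H − uv` is `H`-minor-free. -/
theorem pathOfCopies_hMinorFree (H : SimpleGraph α) [Fintype α]
    (h2 : TwoConnected H) (u v : α) (huv : H.Adj u v) (k : ℕ) (hk : 1 ≤ k) :
    ¬ HasMinor (pathOfCopies H u v k) H := by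
  classical
  rintro ⟨V, hV⟩
  have hstep (x y) : (pathOfCopies H u v k).Adj x y → level u y ≤ level u x + 1 :=
    level_le_level_add_one
  have hcut (j : ℕ) (x) : level u x = 2 * j → x = cut (k := k) huv.ne j := eq_cut_of_level_eq huv.ne
  obtain ⟨i, hik, hwindow⟩ := hV.exists_forall_exists_mem_window h2 hstep hk level_le hcut
  have hmeet (b) : ∃ a, copy huv.ne hik a ∈ V b := by
    obtain ⟨x, hx, h₁, h₂⟩ := hwindow b
    obtain ⟨a, rfl⟩ := mem_range_copy huv.ne hik h₁ h₂
    exact ⟨a, hx⟩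
  have hlow (b) : ∃ x ∈ V b, 2 * i ≤ level u x := (hwindow b).imp fun _ h => ⟨h.1, h.2.1⟩
  have hhigh (b) : ∃ x ∈ V b, level u x ≤ 2 * i + 2 := (hwindow b).imp fun _ h => ⟨h.1, h.2.2⟩
  have hcross (b b' x y) (hbb' : H.Adj b b') (hx : x ∈ V b) (hy : y ∈ V b')
      (hxy : (pathOfCopies H u v k).Adj x y) : x ∈ Set.range (copy huv.ne hik) :=
    mem_range_copy huv.ne hik (hV.le_of_adj_of_ne hstep (hcut i) hlow hbb'.ne hx hy hxy)
      (hV.ge_of_adj_of_ne hstep (hcut (i + 1)) hhigh hbb'.ne hx hy hxy)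
  obtain ⟨ψ, hψ, hψadj⟩ := hV.exists_injective_adj _ le_rfl hmeet hcross
  have hlt : H.deleteEdges {s(u, v)} < H :=
    (deleteEdges_le _).lt_of_not_ge fun hle => by simpa using hle huv
  exact not_isContained_of_lt hlt
    ⟨⟨ψ, fun hbb' => adj_of_adj_copy huv.ne hik (hψadj _ _ hbb')⟩, hψ⟩
end

section
/- Let H be a 2-connected graph, let e = uv be an edge of H, and let H⁻ = H − e. For every k ≥ 2, the graph C_k(H⁻) obtained from k pairwise disjoint copies H⁻_1, ..., H⁻_k of H⁻ by identifying, for each 1 ≤ i ≤ k−1, the copy of v in H⁻_i with the copy of u in H⁻_{i+1}, and additionally identifying the copy of v in H⁻_k with the copy of u in H⁻_1, contains H as a minor. -/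
open SimpleGraph

variable {α β : Type*}

/-- The graph `C_k(H⁻)` obtained from `k` disjoint copies of `H⁻ = H − uv` by
identifying, cyclically, the copy of `v` in the `i`-th copy with the copy of `u` in
the `(i+1 mod k)`-th copy.  A vertex `(i, a)` (with `a ≠ v`) is the vertex `a` of the
`i`-th copy, so `(i + 1 mod k, u)` is also the vertex `v` of the `i`-th copy. -/
def cycleOfCopies (H : SimpleGraph α) (u v : α) (k : ℕ) :
    SimpleGraph (Fin k × {a : α // a ≠ v}) :=
  SimpleGraph.fromRel fun x y =>
    (x.1 = y.1 ∧ (H.deleteEdges {s(u, v)}).Adj (x.2 : α) (y.2 : α)) ∨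
    ((y.1 : ℕ) = ((x.1 : ℕ) + 1) % k ∧ (y.2 : α) = u ∧
      (H.deleteEdges {s(u, v)}).Adj (x.2 : α) v)

/-! Keep the copy of `H − v` inside the first copy of `H⁻` as singleton branch sets, and contract
all the other copies onto `v`. Their union is connected: each copy of `H − v` is connected, and
since `v` has a neighbour `a ≠ u`, the vertex `a` of each copy is adjacent to its vertex `v`,
which is the vertex `u` of the next copy. The edges `vb` with `b ≠ u` are realised through the
vertex `v` of the first copy (= `u` of the second), and the edge `vu` through the vertex `u` of the
first copy, which is the vertex `v` of the last one. -/

namespace SimpleGraph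

variable {V W : Type*} {G : SimpleGraph V}

lemma Connected.induce_range {G' : SimpleGraph W} (hG' : G'.Connected) (f : G' →g G) :
    (G.induce (Set.range f)).Connected :=
  hG'.map ⟨fun x => ⟨f x, x, rfl⟩, f.map_rel⟩ (by rintro ⟨_, x, rfl⟩; exact ⟨x, rfl⟩)

lemma induce_biUnion_connected_of_chain (s : ℕ → Set V) (n : ℕ)
    (hs : ∀ i ≤ n, (G.induce (s i)).Connected)
    (hlink : ∀ i < n, ∃ x ∈ s i, ∃ y ∈ s (i + 1), G.Adj x y) :
    (G.induce (⋃ i ≤ n, s i)).Connected := by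
  induction n with
  | zero =>
    rw [show (⋃ i ≤ 0, s i) = s 0 by ext; simp]
    exact hs 0 le_rfl
  | succ n ih =>
    obtain ⟨x, hx, y, hy, hxy⟩ := hlink n n.lt_succ_self
    rw [Set.biUnion_le_succ]
    exact connected_induce_union
      (ih (fun i hi => hs i (by omega)) (fun i hi => hlink i (by omega))).preconnected
      (hs (n + 1) le_rfl).preconnected (Set.mem_iUnion₂.2 ⟨n, le_rfl, hx⟩) hy hxy

lemma deleteEdges_singleton_adj_right {u v x : V} :
    (G.deleteEdges {s(u, v)}).Adj x v ↔ G.Adj x v ∧ x ≠ u := by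
  rw [deleteEdges_adj, Set.mem_singleton_iff, Sym2.eq_iff]
  exact and_congr_right fun h => by simp [h.ne]

end SimpleGraph

lemma TwoConnected.exists_adj_ne [Fintype α] {H : SimpleGraph α} (h : TwoConnected H) {u v : α}
    (huv : u ≠ v) : ∃ a, a ≠ u ∧ H.Adj v a := by
  classical
  obtain ⟨w, -, hw⟩ := Finset.exists_mem_notMem_of_card_lt_card (s := {u, v})
    (t := Finset.univ) (Finset.card_le_two.trans_lt h.1)
  simp only [Finset.mem_insert, Finset.mem_singleton, not_or] at hw
  have : Nontrivial ({x | x ≠ u} : Set α) :=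
    nontrivial_of_ne ⟨v, huv.symm⟩ ⟨w, hw.1⟩ (by simpa [Subtype.ext_iff] using (Ne.symm hw.2))
  obtain ⟨a, ha⟩ := (h.2.2 u).preconnected.exists_adj_of_nontrivial ⟨v, huv.symm⟩
  exact ⟨a, a.2, ha⟩

theorem hasMinor_of_injective_hom {G : SimpleGraph α} {H : SimpleGraph β} (v : β) (S : Set α)
    (hS : (G.induce S).Connected) (f : H.induce {b | b ≠ v} →g G) (hf : Function.Injective f)
    (hfS : ∀ b, f b ∉ S) (hv : ∀ b : ({b | b ≠ v} : Set β), H.Adj v b → ∃ x ∈ S, G.Adj x (f b)) :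
    HasMinor G H := by
  classical
  refine ⟨fun h => if hh : h = v then S else {f ⟨h, hh⟩}, fun h => ?_, fun h h' hne => ?_,
    fun h => ?_, fun h h' hadj => ?_⟩
  · dsimp only
    split_ifs
    exacts [hS.nonempty.elim fun x => ⟨x, x.2⟩, Set.singleton_nonempty _]
  · by_cases hh : h = v <;> by_cases hh' : h' = v
    · exact absurd (hh.trans hh'.symm) hne
    · simpa [hh, hh'] using hfS ⟨h', hh'⟩
    · simpa [hh, hh'] using hfS ⟨h, hh⟩
    · simpa [hh, hh'] using hf.ne (a₁ := ⟨h, hh⟩) (a₂ := ⟨h', hh'⟩) (by simpa using hne)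
  · dsimp only
    by_cases hh : h = v
    · rw [dif_pos hh]; exact hS
    · rw [dif_neg hh]; simp
  · by_cases hh : h = v <;> by_cases hh' : h' = v
    · exact absurd (hh.trans hh'.symm) hadj.ne
    · obtain ⟨x, hx, hxy⟩ := hv ⟨h', hh'⟩ (hh ▸ hadj)
      simpa [hh, hh'] using ⟨x, hx, hxy⟩
    · obtain ⟨x, hx, hxy⟩ := hv ⟨h, hh⟩ (hh' ▸ hadj.symm)
      simpa [hh, hh'] using ⟨x, hx, hxy.symm⟩
    · have : (H.induce {b | b ≠ v}).Adj ⟨h, hh⟩ ⟨h', hh'⟩ := hadj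
      simpa [hh, hh'] using f.map_adj this

namespace cycleOfCopies

variable {H : SimpleGraph α} {u v : α} {k : ℕ}

lemma adj_of_adj (i : Fin k) {a b : {a : α // a ≠ v}}
    (hab : (H.deleteEdges {s(u, v)}).Adj a b) :
    (cycleOfCopies H u v k).Adj (i, a) (i, b) := by
  rw [cycleOfCopies, fromRel_adj]
  exact ⟨fun h => hab.ne (congrArg (fun p => (p.2 : α)) h), Or.inl (Or.inl ⟨rfl, hab⟩)⟩

lemma adj_succ {i j : Fin k} (hij : (j : ℕ) = (i + 1) % k) (hu : u ≠ v) {a : {a : α // a ≠ v}}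
    (hav : (H.deleteEdges {s(u, v)}).Adj a v) :
    (cycleOfCopies H u v k).Adj (i, a) (j, ⟨u, hu⟩) := by
  rw [cycleOfCopies, fromRel_adj]
  refine ⟨fun h => ?_, Or.inl (Or.inr ⟨hij, rfl, hav⟩)⟩
  exact (deleteEdges_singleton_adj_right.1 hav).2 (congrArg (fun p => (p.2 : α)) h)

def copyHom (i : Fin k) : H.induce {a | a ≠ v} →g cycleOfCopies H u v k where
  toFun a := (i, a)
  map_rel' {a b} hab := adj_of_adj i <| (deleteEdges_adj ..).2
    ⟨hab, by simpa using ⟨fun _ => b.2, fun h => absurd h a.2⟩⟩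

lemma copyHom_injective (i : Fin k) :
    Function.Injective (copyHom (H := H) (u := u) (v := v) i) :=
  fun _ _ h => (Prod.mk.inj h).2

lemma range_copyHom (i : Fin k) :
    Set.range (copyHom (H := H) (u := u) (v := v) i) = {p | (p.1 : ℕ) = i} := by
  ext ⟨j, a⟩
  simp [copyHom, eq_comm, Fin.ext_iff]

lemma connected_induce_fst_eq (hH : (H.induce {a | a ≠ v}).Connected) (i : Fin k) :
    ((cycleOfCopies H u v k).induce {p | (p.1 : ℕ) = i}).Connected :=
  range_copyHom (u := u) i ▸ hH.induce_range (copyHom i)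

lemma connected_induce_fst_ne_zero (hk : 2 ≤ k) (hH : (H.induce {a | a ≠ v}).Connected)
    (hu : u ≠ v) {a : {a : α // a ≠ v}} (hav : (H.deleteEdges {s(u, v)}).Adj a v) :
    ((cycleOfCopies H u v k).induce {p | (p.1 : ℕ) ≠ 0}).Connected := by
  have hS : {p : Fin k × {a : α // a ≠ v} | (p.1 : ℕ) ≠ 0} =
      ⋃ i ≤ k - 2, {p | (p.1 : ℕ) = i + 1} := by
    ext ⟨j, b⟩
    simp only [Set.mem_ofPred_eq, Set.mem_iUnion, exists_prop]
    exact ⟨fun hj => ⟨j - 1, by omega, by omega⟩, fun ⟨i, _, hi⟩ => by omega⟩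
  rw [hS]
  refine induce_biUnion_connected_of_chain _ _ (fun i hi => ?_) (fun i hi => ?_)
  · exact connected_induce_fst_eq hH (⟨i + 1, by omega⟩ : Fin k)
  · refine ⟨(⟨i + 1, by omega⟩, a), rfl, (⟨i + 2, by omega⟩, ⟨u, hu⟩), rfl, adj_succ ?_ hu hav⟩
    simp [Nat.mod_eq_of_lt (show i + 2 < k by omega)]

end cycleOfCopies

/-- For a 2-connected graph `H` with an edge `uv`, the cycle of `k ≥ 2` copies of
`H⁻ = H − uv` contains `H` as a minor. -/
theorem cycleOfCopies_hasMinor (H : SimpleGraph α) [Fintype α]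
    (h2 : TwoConnected H) (u v : α) (huv : H.Adj u v) (k : ℕ) (hk : 2 ≤ k) :
    HasMinor (cycleOfCopies H u v k) H := by
  have hu : u ≠ v := huv.ne
  obtain ⟨a, hau, hva⟩ := h2.exists_adj_ne hu
  have hav : (H.deleteEdges {s(u, v)}).Adj a v :=
    deleteEdges_singleton_adj_right.2 ⟨hva.symm, hau⟩
  refine hasMinor_of_injective_hom v _
    (cycleOfCopies.connected_induce_fst_ne_zero (a := ⟨a, hva.ne'⟩) hk (h2.2.2 v) hu hav)
    (cycleOfCopies.copyHom ⟨0, by omega⟩) (cycleOfCopies.copyHom_injective _)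
    (fun b => by simp [cycleOfCopies.copyHom]) fun b hvb => ?_
  by_cases hbu : (b : α) = u
  · obtain rfl : b = ⟨u, hu⟩ := Subtype.ext hbu
    refine ⟨(⟨k - 1, by omega⟩, ⟨a, hva.ne'⟩), by simp; omega, cycleOfCopies.adj_succ ?_ hu hav⟩
    simp [Nat.sub_add_cancel (show 1 ≤ k by omega)]
  · refine ⟨(⟨1, by omega⟩, ⟨u, hu⟩), one_ne_zero, (cycleOfCopies.adj_succ ?_ hu
      (deleteEdges_singleton_adj_right.2 ⟨hvb.symm, hbu⟩)).symm⟩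
    simp [Nat.mod_eq_of_lt (show 1 < k by omega)]
end

section
/- Let H be a graph and let G be an H-minimal graph. Then for every model (V_h)_{h in V(H)} of H in G and every vertex h of H, the subgraph of G induced by V_h is an almost tree with respect to its prescribed sets, i.e., every subtree of G[V_h] that contains at least one vertex of each prescribed set of V_h contains all vertices of V_h. -/
open SimpleGraph

variable {α β : Type*}

/-- Let `G` be `H`-minimal.  For every model `(V h)` of `H` in `G` and every vertex
`h` of `H`, the induced subgraph `G[V h]` is an almost tree with respect to its
prescribed sets: every subtree `T` of `G[V h]` containing, for each neighbor `h'` of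
`h` in `H`, at least one vertex with a neighbor in `V h'`, contains all of `V h`. -/
theorem minorMinimal_branch_sets_almost_trees (G : SimpleGraph α) (H : SimpleGraph β)
    (hmin : MinorMinimal G H) (V : β → Set α) (hV : IsMinorModel G H V) (h : β)
    (T : (G.induce (V h)).Subgraph) (htree : T.coe.IsTree)
    (hsteiner : ∀ h', H.Adj h h' → ∃ x ∈ T.verts, ∃ y ∈ V h', G.Adj (x : α) y) :
    T.verts = Set.univ := by
  classical
  by_contra hne
  obtain ⟨v₀, hv₀⟩ : ∃ v : V h, v ∉ T.verts := by
    by_contra hc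
    push_neg at hc
    exact hne (Set.eq_univ_of_forall hc)
  obtain ⟨hnonempty, hdisj, hconn, hedge⟩ := hV
  set x : α := (v₀ : α) with hxdef
  have hxVh : x ∈ V h := v₀.2
  -- the new branch sets in α
  set W : β → Set α := fun k => if k = h then Subtype.val '' T.verts else V k with hWdef
  have hWh : W h = Subtype.val '' T.verts := by simp [hWdef]
  have hWk : ∀ k, k ≠ h → W k = V k := fun k hk => by simp [hWdef, hk]
  have hWsub : ∀ k, W k ⊆ V k := by
    intro k
    by_cases hk : k = h
    · subst hk
      rw [hWh]
      rintro a ⟨v, _, rfl⟩; exact v.2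
    · rw [hWk k hk]
  have hxW : ∀ k, x ∉ W k := by
    intro k
    by_cases hk : k = h
    · subst hk
      rw [hWh]
      rintro ⟨v, hv, hvx⟩
      exact hv₀ (by rwa [show v₀ = v from Subtype.ext hvx.symm])
    · intro hx
      exact (hdisj (Ne.symm hk)).le_bot ⟨hxVh, hWsub k hx⟩
  -- the new model in G - x
  set S : Set α := {y | y ≠ x} with hSdef
  have hWS : ∀ k, W k ⊆ S := fun k a ha hax => hxW k (hax ▸ ha)
  set V' : β → Set S := fun k => Subtype.val ⁻¹' (W k) with hV'def
  apply hmin.2 x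
  refine ⟨V', ?_, ?_, ?_, ?_⟩
  · -- nonempty
    intro k
    by_cases hk : k = h
    · subst hk
      obtain ⟨v⟩ := htree.isConnected.nonempty
      have hm : ((v.1 : α)) ∈ W k := by rw [hWh]; exact ⟨v.1, v.2, rfl⟩
      exact ⟨⟨(v.1 : α), hWS k hm⟩, hm⟩
    · obtain ⟨a, ha⟩ := hnonempty k
      have haW : a ∈ W k := by rw [hWk k hk]; exact ha
      exact ⟨⟨a, hWS k haW⟩, haW⟩
  · -- disjoint
    intro k k' hkk'
    rw [Set.disjoint_left]
    rintro z hz hz'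
    exact (hdisj hkk').le_bot ⟨hWsub k hz, hWsub k' hz'⟩
  · -- connected
    intro k
    by_cases hk : k = h
    · subst hk
      refine Connected.map (G := T.coe) ?_ ?_ htree.isConnected
      · refine ⟨fun v => ⟨⟨(v.1 : α), hWS k (by rw [hWh]; exact ⟨v.1, v.2, rfl⟩)⟩,
          show ((v.1 : α)) ∈ W k by rw [hWh]; exact ⟨v.1, v.2, rfl⟩⟩, ?_⟩
        intro a b hab
        exact T.adj_sub hab
      · rintro ⟨⟨z, hzS⟩, hzW⟩
        rw [hV'def] at hzW
        simp only [Set.mem_preimage, hWh] at hzW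
        obtain ⟨v, hv, hvz⟩ := hzW
        exact ⟨⟨v, hv⟩, by apply Subtype.ext; apply Subtype.ext; exact hvz⟩
    · refine Connected.map (G := G.induce (V k)) ?_ ?_ (hconn k)
      · refine ⟨fun v => ⟨⟨(v : α), hWS k (by rw [hWk k hk]; exact v.2)⟩,
          show ((v : α)) ∈ W k by rw [hWk k hk]; exact v.2⟩, ?_⟩
        intro a b hab
        exact hab
      · rintro ⟨⟨z, hzS⟩, hzW⟩
        rw [hV'def] at hzW
        simp only [Set.mem_preimage, hWk k hk] at hzW
        exact ⟨⟨z, hzW⟩, by apply Subtype.ext; apply Subtype.ext; rfl⟩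
  · -- edges
    have key : ∀ k k', H.Adj k k' → ∃ a ∈ W k, ∃ b ∈ W k', G.Adj a b := by
      intro k k' hkk'
      by_cases hk : k = h
      · subst hk
        obtain ⟨a, haT, b, hbV, hab⟩ := hsteiner k' hkk'
        have hk' : k' ≠ k := fun hh => hkk'.ne hh.symm
        exact ⟨(a : α), by rw [hWh]; exact ⟨a, haT, rfl⟩,
          b, by rw [hWk k' hk']; exact hbV, hab⟩
      · by_cases hk' : k' = h
        · subst hk'
          obtain ⟨a, haT, b, hbV, hab⟩ := hsteiner k hkk'.symm
          exact ⟨b, by rw [hWk k hk]; exact hbV,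
            (a : α), by rw [hWh]; exact ⟨a, haT, rfl⟩, hab.symm⟩
        · obtain ⟨a, haV, b, hbV, hab⟩ := hedge k k' hkk'
          exact ⟨a, by rw [hWk k hk]; exact haV,
            b, by rw [hWk k' hk']; exact hbV, hab⟩
    intro k k' hkk'
    obtain ⟨a, haW, b, hbW, hab⟩ := key k k' hkk'
    exact ⟨⟨a, hWS k haW⟩, haW, ⟨b, hWS k' hbW⟩, hbW, hab⟩
end

section
/- Every connected C_4-minimal graph either has exactly four vertices or is a cycle (connected and 2-regular). -/
open SimpleGraph

variable {α β : Type*}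

/-!
Deleting a vertex that lies outside a model of `C₄` keeps the model, so in a `C₄`-minimal graph
every vertex lies in every model. The vertices of a cycle of length at least four carry a model,
and joining paths through the four branch sets of a model gives such a cycle; hence `G` has a
cycle of length at least four and every such cycle is Hamiltonian. A Hamiltonian cycle of length
at least five has no chord: a chord splits it into two shorter cycles, each missing a vertex,
and one of them still has length at least four. So `G` is that cycle unless it has four vertices.
-/

lemma IsMinorModel.hasMinor_induce {G : SimpleGraph α} {H : SimpleGraph β} {V : β → Set α}
    (hV : IsMinorModel G H V) {s : Set α} (hs : ∀ h, V h ⊆ s) : HasMinor (G.induce s) H := by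
  obtain ⟨hne, hdisj, hconn, hadj⟩ := hV
  refine ⟨fun h => Subtype.val ⁻¹' V h, fun h => ?_, fun h h' hhh' => ?_, fun h => ?_,
    fun h h' hhh' => ?_⟩
  · obtain ⟨x, hx⟩ := hne h
    exact ⟨⟨x, hs h hx⟩, hx⟩
  · exact (hdisj hhh').preimage _
  · let e : G.induce (V h) ≃g (G.induce s).induce (Subtype.val ⁻¹' V h) :=
      { toFun := fun x => ⟨⟨x, hs h x.2⟩, x.2⟩
        invFun := fun x => ⟨x.1, x.2⟩
        left_inv := fun _ => rfl
        right_inv := fun _ => rfl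
        map_rel_iff' := Iff.rfl }
    exact e.connected_iff.mp (hconn h)
  · obtain ⟨x, hx, y, hy, hxy⟩ := hadj h h' hhh'
    exact ⟨⟨x, hs h hx⟩, hx, ⟨y, hs h' hy⟩, hy, hxy⟩

lemma MinorMinimal.exists_mem_of_isMinorModel {G : SimpleGraph α} {H : SimpleGraph β}
    {V : β → Set α} (hG : MinorMinimal G H) (hV : IsMinorModel G H V) (x : α) :
    ∃ h, x ∈ V h := by
  by_contra! hx
  exact hG.2 x (hV.hasMinor_induce fun h y hy (hyx : y = x) => hx h (hyx ▸ hy))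

lemma cycleGraph_four_adj_iff {i j : Fin 4} : (cycleGraph 4).Adj i j ↔ j = i + 1 ∨ i = j + 1 := by
  revert i j
  decide

lemma isMinorModel_cycleGraph_four {G : SimpleGraph α} {V : Fin 4 → Set α}
    (hne : ∀ i, (V i).Nonempty) (hdisj : Pairwise fun i j => Disjoint (V i) (V j))
    (hconn : ∀ i, (G.induce (V i)).Connected) (hadj : ∀ i, ∃ x ∈ V i, ∃ y ∈ V (i + 1), G.Adj x y) :
    IsMinorModel G (cycleGraph 4) V := by
  refine ⟨hne, hdisj, hconn, fun i j hij => ?_⟩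
  rcases cycleGraph_four_adj_iff.mp hij with rfl | rfl
  · exact hadj i
  · obtain ⟨x, hx, y, hy, hxy⟩ := hadj j
    exact ⟨y, hy, x, hx, hxy.symm⟩

namespace SimpleGraph

variable {G : SimpleGraph α} {u v w x y : α}

lemma Connected.exists_isPath_induce {s : Set α} (hs : (G.induce s).Connected) (hu : u ∈ s)
    (hv : v ∈ s) : ∃ p : G.Walk u v, p.IsPath ∧ ∀ x ∈ p.support, x ∈ s := by
  classical
  obtain ⟨q⟩ := hs.preconnected ⟨u, hu⟩ ⟨v, hv⟩
  let p : G.Walk u v := q.toPath.1.map (Embedding.induce s).toHom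
  refine ⟨p, q.toPath.2.map Subtype.val_injective, fun x hx => ?_⟩
  have hsupp : p.support = q.toPath.1.support.map Subtype.val := Walk.support_map _ _
  rw [hsupp, List.mem_map] at hx
  obtain ⟨y, -, rfl⟩ := hx
  exact y.2

namespace Walk

lemma IsPath.cons_isCycle_of_two_le_length {p : G.Walk v u} (hp : p.IsPath) (h : G.Adj u v)
    (hlen : 2 ≤ p.length) : (cons h p).IsCycle := by
  refine (cons_isCycle_iff p h).mpr ⟨hp, fun he => ?_⟩
  have := hp.length_eq_one_of_mem_edges (Sym2.eq_swap ▸ he)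
  omega

lemma IsPath.append_cons_of_disjoint {s t : Set α} {p : G.Walk u v} {q : G.Walk w x}
    (hp : p.IsPath) (hq : q.IsPath) (hps : ∀ y ∈ p.support, y ∈ s) (hqt : ∀ y ∈ q.support, y ∈ t)
    (hst : Disjoint s t) (h : G.Adj v w) :
    (p.append (cons h q)).IsPath ∧ ∀ y ∈ (p.append (cons h q)).support, y ∈ s ∪ t := by
  simp only [isPath_def, support_append, support_cons, List.tail_cons, List.nodup_append,
    List.mem_append] at hp hq ⊢
  refine ⟨⟨hp, hq, fun y hy z hz => hst.ne_of_mem (hps y hy) (hqt z hz)⟩, ?_⟩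
  rintro y (hy | hy)
  exacts [Or.inl (hps y hy), Or.inr (hqt y hy)]

lemma IsCycle.exists_isMinorModel_cycleGraph_four {c : G.Walk u u} (hc : c.IsCycle)
    (hlen : 4 ≤ c.length) :
    ∃ V : Fin 4 → Set α, IsMinorModel G (cycleGraph 4) V ∧ ∀ i, V i ⊆ {v | v ∈ c.support} := by
  match c, hc, hlen with
  | .cons (v := a) hua (.cons (v := b) hab (.cons (v := w) hbw (.cons hww' q))), hc, _ =>
  have hnd := hc.support_nodup
  simp only [support_cons, List.tail_cons, List.nodup_cons, List.mem_cons] at hnd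
  refine ⟨![{a}, {b}, {w}, {v | v ∈ q.support}], isMinorModel_cycleGraph_four (fun i => ?_)
    (fun i j hij => ?_) (fun i => ?_) (fun i => ?_), fun i => ?_⟩
  · fin_cases i <;> simp
  · fin_cases i <;> fin_cases j <;> simp_all [eq_comm]
  · fin_cases i <;> simp [q.connected_induce_support]
  · fin_cases i
    exacts [⟨a, rfl, b, rfl, hab⟩, ⟨b, rfl, w, rfl, hbw⟩, ⟨w, rfl, _, q.start_mem_support, hww'⟩,
      ⟨u, q.end_mem_support, a, rfl, hua⟩]
  · fin_cases i <;> intro v hv <;> simp_all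

lemma connected_of_forall_mem_support {c : G.Walk u u} (hc : ∀ v, v ∈ c.support) :
    G.Connected := by
  classical
  have : Nonempty α := ⟨u⟩
  exact ⟨fun v w => ((c.takeUntil v (hc v)).reverse.append (c.takeUntil w (hc w))).reachable⟩

lemma IsCycle.length_eq_card [Fintype α] {c : G.Walk u u} (hc : c.IsCycle)
    (hspan : ∀ v, v ∈ c.support) : c.length = Fintype.card α := by
  classical
  refine (isHamiltonianCycle_iff_isCycle_and_support_count_tail_eq_one.mpr
    ⟨hc, fun v => List.count_eq_one_of_mem hc.support_nodup ?_⟩).length_eq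
  obtain rfl | hv := List.mem_cons.mp (c.cons_tail_support ▸ hspan v)
  exacts [c.end_mem_tail_support hc.not_nil, hv]

end Walk

def LongCyclesSpanning (G : SimpleGraph α) : Prop :=
  ∀ ⦃u : α⦄ (c : G.Walk u u), c.IsCycle → 4 ≤ c.length → ∀ v, v ∈ c.support

open Walk in
lemma LongCyclesSpanning.mk_mem_edges_of_adj (hG : G.LongCyclesSpanning) {c : G.Walk x x}
    (hc : c.IsCycle) (hlen : 5 ≤ c.length) (hxy : G.Adj x y) : s(x, y) ∈ c.edges := by
  classical
  cases c with
  | nil => simp at hlen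
  | cons hxa p =>
  rename_i a
  have hp : p.IsPath := ((cons_isCycle_iff p hxa).mp hc).1
  have hy : y ∈ p.support := by simpa [hxy.ne'] using hG _ hc (by omega) y
  set p₁ := p.takeUntil y hy
  set p₂ := p.dropUntil y hy
  have hp₁ : p₁.IsPath := hp.takeUntil hy
  have hp₂ : p₂.IsPath := hp.dropUntil hy
  have hsplit : p₁.append p₂ = p := p.take_spec hy
  have hlen' : p₁.length + p₂.length + 1 = (cons hxa p).length := by
    rw [length_cons, ← hsplit, length_append]
  by_cases h₁ : p₁.length = 0
  · rw [← eq_of_length_eq_zero h₁]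
    simp
  by_cases h₂ : p₂.length = 1
  · have hlast : s(x, y) ∈ p₂.edges := by
      have := p₂.mk_start_snd_mem_edges (by simp [← length_eq_zero_iff, h₂])
      rwa [snd, (hp₂.getVert_eq_end_iff h₂.ge).mpr h₂.symm, Sym2.eq_swap] at this
    simp [← hsplit, hlast]
  have h₂' : 2 ≤ p₂.length := by
    have : p₂.length ≠ 0 := fun h => hxy.ne (eq_of_length_eq_zero h).symm
    omega
  exfalso
  rcases le_or_gt 2 p₁.length with h | h
  · -- `x, p₁, x` is a cycle of length at least four avoiding the second vertex of `p₂`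
    have hA : (cons hxa (p₁.concat hxy.symm)).IsCycle :=
      (hp₁.concat (endpoint_notMem_support_takeUntil hp hy hxy.ne) hxy.symm
        ).cons_isCycle_of_two_le_length hxa (by simp; omega)
    have hz := hG _ hA (by simp; omega) p₂.snd
    have hzx : p₂.snd ≠ x := fun h => by
      have := (hp₂.getVert_eq_end_iff (by omega)).mp h
      omega
    have hzy : p₂.snd ≠ y := fun h => by
      have := (hp₂.getVert_eq_start_iff (by omega)).mp h
      omega
    simp only [support_cons, support_concat, List.mem_cons, List.mem_append, hzx,
      List.not_mem_nil, false_or, or_false] at hz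
    exact (hsplit ▸ hp).ne_of_mem_support_of_append hzy hz (p₂.getVert_mem_support 1) rfl
  · -- `x, p₂` is a cycle of length at least four avoiding `a`
    have hB : (cons hxy p₂).IsCycle := hp₂.cons_isCycle_of_two_le_length hxy h₂'
    have ha := hG _ hB (by simp; omega) a
    have hay : a ≠ y := by
      rintro rfl
      exact h₁ (isPath_iff_nil.mp hp₁).length_eq_zero
    simp only [support_cons, List.mem_cons, hxa.ne', false_or] at ha
    exact (hsplit ▸ hp).ne_of_mem_support_of_append hay p₁.start_mem_support ha rfl

lemma LongCyclesSpanning.toSubgraph_adj (hG : G.LongCyclesSpanning) {c : G.Walk u u}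
    (hc : c.IsCycle) (hlen : 5 ≤ c.length) (hvw : G.Adj v w) : c.toSubgraph.Adj v w := by
  classical
  have hv : v ∈ c.support := hG c hc (by omega) v
  rw [← c.toSubgraph_rotate hv, Walk.adj_toSubgraph_iff_mem_edges]
  exact hG.mk_mem_edges_of_adj (hc.rotate hv) (by rwa [Walk.length_rotate]) hvw

lemma LongCyclesSpanning.isCycleGraph (hG : G.LongCyclesSpanning) {c : G.Walk u u}
    (hc : c.IsCycle) (hlen : 5 ≤ c.length) : IsCycleGraph G := by
  have hspan := hG c hc (by omega)
  refine ⟨Walk.connected_of_forall_mem_support hspan, fun v => ?_⟩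
  have : G.neighborSet v = c.toSubgraph.neighborSet v :=
    Set.ext fun w => ⟨hG.toSubgraph_adj hc hlen, c.toSubgraph.adj_sub⟩
  rw [this]
  exact hc.ncard_neighborSet_toSubgraph_eq_two (hspan v)

end SimpleGraph

lemma IsMinorModel.exists_isCycle_four_le_length {G : SimpleGraph α} {V : Fin 4 → Set α}
    (hV : IsMinorModel G (cycleGraph 4) V) :
    ∃ (u : α) (c : G.Walk u u), c.IsCycle ∧ 4 ≤ c.length := by
  obtain ⟨-, hdisj, hconn, hadj⟩ := hV
  obtain ⟨a₀, ha₀, b₁, hb₁, h₀₁⟩ := hadj 0 1 (by decide)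
  obtain ⟨a₁, ha₁, b₂, hb₂, h₁₂⟩ := hadj 1 2 (by decide)
  obtain ⟨a₂, ha₂, b₃, hb₃, h₂₃⟩ := hadj 2 3 (by decide)
  obtain ⟨a₃, ha₃, b₀, hb₀, h₃₀⟩ := hadj 3 0 (by decide)
  obtain ⟨p₀, hp₀, hs₀⟩ := (hconn 0).exists_isPath_induce hb₀ ha₀
  obtain ⟨p₁, hp₁, hs₁⟩ := (hconn 1).exists_isPath_induce hb₁ ha₁
  obtain ⟨p₂, hp₂, hs₂⟩ := (hconn 2).exists_isPath_induce hb₂ ha₂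
  obtain ⟨p₃, hp₃, hs₃⟩ := (hconn 3).exists_isPath_induce hb₃ ha₃
  have hd : ∀ i j : Fin 4, i ≠ j → Disjoint (V i) (V j) := fun i j hij => hdisj hij
  obtain ⟨hq₂, hs₂₃⟩ := hp₂.append_cons_of_disjoint hp₃ hs₂ hs₃ (hd 2 3 (by decide)) h₂₃
  obtain ⟨hq₁, hs₁₂₃⟩ := hp₁.append_cons_of_disjoint hq₂ hs₁ hs₂₃
    ((hd 1 2 (by decide)).union_right (hd 1 3 (by decide))) h₁₂
  obtain ⟨hq₀, -⟩ := hp₀.append_cons_of_disjoint hq₁ hs₀ hs₁₂₃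
    ((hd 0 1 (by decide)).union_right ((hd 0 2 (by decide)).union_right (hd 0 3 (by decide)))) h₀₁
  exact ⟨a₃, .cons h₃₀ _, hq₀.cons_isCycle_of_two_le_length h₃₀ (by simp; omega), by simp; omega⟩

lemma MinorMinimal.longCyclesSpanning {G : SimpleGraph α} (hG : MinorMinimal G (cycleGraph 4)) :
    G.LongCyclesSpanning := by
  intro u c hc hlen v
  obtain ⟨V, hV, hVc⟩ := hc.exists_isMinorModel_cycleGraph_four hlen
  obtain ⟨i, hi⟩ := hG.exists_mem_of_isMinorModel hV v
  exact hVc i hi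

theorem c4_minimal_general (G : SimpleGraph α) [Fintype α]
    (hmin : MinorMinimal G (cycleGraph 4)) :
    Fintype.card α = 4 ∨ IsCycleGraph G := by
  obtain ⟨V, hV⟩ := hmin.1
  obtain ⟨u, c, hc, hlen⟩ := hV.exists_isCycle_four_le_length
  have hG := hmin.longCyclesSpanning
  have hcard := hc.length_eq_card (hG c hc hlen)
  rcases hlen.eq_or_lt with h4 | h5
  · exact Or.inl (hcard ▸ h4.symm)
  · exact Or.inr (hG.isCycleGraph hc h5)

/-- Every connected `C₄`-minimal graph has exactly four vertices or is a cycle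
(connected and 2-regular). -/
theorem c4_minimal (G : SimpleGraph α) [Fintype α] (hconn : G.Connected)
    (hmin : MinorMinimal G (cycleGraph 4)) :
    Fintype.card α = 4 ∨ IsCycleGraph G :=
  c4_minimal_general G hmin
end

section
/- Let H' be a graph and let H be the disjoint union of H' and a single isolated vertex. A connected graph G is H-minor-free if and only if G is H'-minor-free or G is H'-minimal. -/
open SimpleGraph

variable {α β : Type*}

/-- The disjoint union of `H'` and a single isolated vertex. -/
def addIsolatedVertex (H' : SimpleGraph β) : SimpleGraph (β ⊕ Unit) where
  Adj x y :=
    match x, y with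
    | Sum.inl a, Sum.inl b => H'.Adj a b
    | _, _ => False
  symm := by
    constructor
    rintro (a | a) (b | b) h <;> simp_all
    exact h.symm
  loopless := by
    constructor
    rintro (a | a) h <;> simp_all

/-! Deleting a vertex `x` frees exactly the room for the extra branch set `{x}`: a model of `H'`
in `G - x` becomes a model of `H' + K₁` in `G` by adding `{x}`, and conversely the branch set of
the isolated vertex contains some `x` that the other branch sets avoid.  Hence `G` has an
`(H' + K₁)`-minor iff some `G - x` has an `H'`-minor, and the theorem is propositional logic. -/

noncomputable def induceInduceIso (G : SimpleGraph α) (s : Set α) (t : Set s) :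
    (G.induce s).induce t ≃g G.induce (Subtype.val '' t) where
  toEquiv := Equiv.Set.image Subtype.val t Subtype.val_injective
  map_rel_iff' := by
    rintro ⟨⟨a, ha⟩, hat⟩ ⟨⟨b, hb⟩, hbt⟩
    simp [Equiv.Set.image, Equiv.Set.imageOfInjOn]

lemma connected_induce_singleton (G : SimpleGraph α) (x : α) : (G.induce {x}).Connected :=
  ⟨Preconnected.of_subsingleton⟩

def addIsolatedVertex.inlHom (H : SimpleGraph β) : H →g addIsolatedVertex H :=
  ⟨Sum.inl, id⟩

namespace IsMinorModel

variable {γ : Type*} {G : SimpleGraph α} {H : SimpleGraph β} {V : β → Set α}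

lemma comp_hom {K : SimpleGraph γ} (hV : IsMinorModel G H V) (f : K →g H)
    (hf : Function.Injective f) : IsMinorModel G K (V ∘ f) := by
  obtain ⟨hne, hdisj, hconn, hadj⟩ := hV
  exact ⟨fun c => hne (f c), fun c d hcd => hdisj (hf.ne hcd), fun c => hconn (f c),
    fun c d hcd => hadj (f c) (f d) (f.map_adj hcd)⟩

lemma image_val {s : Set α} {V : β → Set s} (hV : IsMinorModel (G.induce s) H V) :
    IsMinorModel G H fun b => Subtype.val '' V b := by
  obtain ⟨hne, hdisj, hconn, hadj⟩ := hV
  refine ⟨fun b => (hne b).image _, fun a b hab => ?_, fun b => ?_, fun a b hab => ?_⟩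
  · exact (Set.disjoint_image_iff Subtype.val_injective).mpr (hdisj hab)
  · exact (induceInduceIso G s (V b)).connected_iff.mp (hconn b)
  · obtain ⟨u, hu, v, hv, huv⟩ := hadj a b hab
    exact ⟨u, ⟨u, hu, rfl⟩, v, ⟨v, hv, rfl⟩, huv⟩

lemma preimage_val {s : Set α} (hV : IsMinorModel G H V) (hs : ∀ b, V b ⊆ s) :
    IsMinorModel (G.induce s) H fun b => Subtype.val ⁻¹' V b := by
  obtain ⟨hne, hdisj, hconn, hadj⟩ := hV
  have himage (b : β) : Subtype.val '' (Subtype.val ⁻¹' V b : Set s) = V b := by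
    rw [Set.image_preimage_eq_inter_range, Subtype.range_coe, Set.inter_eq_left.mpr (hs b)]
  refine ⟨fun b => ?_, fun a b hab => (hdisj hab).preimage _, fun b => ?_, fun a b hab => ?_⟩
  · obtain ⟨v, hv⟩ := hne b
    exact ⟨⟨v, hs b hv⟩, hv⟩
  · exact (induceInduceIso G s _).connected_iff.mpr (himage b ▸ hconn b)
  · obtain ⟨u, hu, v, hv, huv⟩ := hadj a b hab
    exact ⟨⟨u, hs a hu⟩, hu, ⟨v, hs b hv⟩, hv, huv⟩

lemma sumElim_singleton (hV : IsMinorModel G H V) {x : α} (hx : ∀ b, x ∉ V b) :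
    IsMinorModel G (addIsolatedVertex H) (Sum.elim V fun _ => {x}) := by
  obtain ⟨hne, hdisj, hconn, hadj⟩ := hV
  refine ⟨?_, ?_, ?_, ?_⟩
  · rintro (b | u)
    exacts [hne b, Set.singleton_nonempty x]
  · rintro (a | u) (b | v) hab
    · exact hdisj fun h => hab (congrArg Sum.inl h)
    · exact Set.disjoint_singleton_right.mpr (hx a)
    · exact Set.disjoint_singleton_left.mpr (hx b)
    · exact absurd (congrArg Sum.inr (Subsingleton.elim u v)) hab
  · rintro (b | u)
    exacts [hconn b, connected_induce_singleton G x]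
  · rintro (a | u) (b | v) hab
    · exact hadj a b hab
    all_goals exact hab.elim

end IsMinorModel

variable {G : SimpleGraph α} {H : SimpleGraph β}

lemma HasMinor.of_induce {s : Set α} : HasMinor (G.induce s) H → HasMinor G H
  | ⟨_, hV⟩ => ⟨_, hV.image_val⟩

lemma hasMinor_addIsolatedVertex_iff :
    HasMinor G (addIsolatedVertex H) ↔ ∃ x, HasMinor (G.induce {y | y ≠ x}) H := by
  constructor
  · rintro ⟨V, hV⟩
    obtain ⟨x, hx⟩ := hV.1 (Sum.inr ())
    have havoid (b : β) : V (Sum.inl b) ⊆ {y | y ≠ x} := fun y hy hyx =>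
      (hV.2.1 Sum.inl_ne_inr).le_bot ⟨hy, hyx ▸ hx⟩
    exact ⟨x, _,
      (hV.comp_hom (addIsolatedVertex.inlHom H) Sum.inl_injective).preimage_val havoid⟩
  · rintro ⟨x, V, hV⟩
    refine ⟨_, hV.image_val.sumElim_singleton (x := x) ?_⟩
    rintro b ⟨y, -, hyx⟩
    exact y.2 hyx

theorem addIsolated_minor_free_iff_general (G : SimpleGraph α) (H' : SimpleGraph β) :
    ¬ HasMinor G (addIsolatedVertex H') ↔ (¬ HasMinor G H' ∨ MinorMinimal G H') := by
  rw [hasMinor_addIsolatedVertex_iff, MinorMinimal]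
  by_cases hH' : HasMinor G H'
  · simp [hH']
  · simp only [hH', not_false_eq_true, true_or, iff_true, not_exists]
    exact fun x hx => hH' hx.of_induce

/-- Let `H` be `H'` plus an isolated vertex.  A connected graph `G` is `H`-minor-free
if and only if `G` is `H'`-minor-free or `G` is `H'`-minimal. -/
theorem addIsolated_minor_free_iff (G : SimpleGraph α) (H' : SimpleGraph β)
    (hconn : G.Connected) :
    ¬ HasMinor G (addIsolatedVertex H') ↔ (¬ HasMinor G H' ∨ MinorMinimal G H') :=
  addIsolated_minor_free_iff_general G H'
end
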